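/- For any d > 1 and any nontrivial Z^d subshift X which has the D*-condition, there exists N' such that for any R_1 and R_2 with R_2 ≥ R_1 ≥ N', there is a factor map φ : X → W_{R_1,R_2} from X onto the Widom–Rowlinson SFT W_{R_1,R_2}. -/

import Mathlib

open Filter MeasureTheory

/-! ### Basic setup: `ℤ^d` configurations, the shift action, subshifts -/

/-- A site of the lattice `ℤ^d`. -/
abbrev Site (d : ℕ) := Fin d → ℤ

/-- A configuration over the alphabet `A` on the lattice `ℤ^d`. -/
abbrev Config (d : ℕ) (A : Type*) := Site d → A

/-- The product (discrete) topology on the space of configurations. -/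
def configTop (d : ℕ) (A : Type*) : TopologicalSpace (Config d A) :=
  @Pi.topologicalSpace (Site d) (fun _ => A) (fun _ => ⊥)

/-- The product (discrete) Borel σ-algebra on the space of configurations. -/
def configMS (d : ℕ) (A : Type*) : MeasurableSpace (Config d A) :=
  @MeasurableSpace.pi (Site d) (fun _ => A) (fun _ => ⊤)

/-- Borel measures on the configuration space. -/
abbrev ConfigMeasure (d : ℕ) (A : Type*) :=
  @MeasureTheory.Measure (Config d A) (configMS d A)

/-- The shift action of `ℤ^d`: `(shift t x) s = x (s + t)`. -/
def shift {d : ℕ} {A : Type*} (t : Site d) (x : Config d A) : Config d A :=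
  fun s => x (s + t)

/-- A `ℤ^d` subshift over the alphabet `A`: a closed shift-invariant set of
configurations. -/
structure Subshift (d : ℕ) (A : Type*) where
  carrier : Set (Config d A)
  isClosed' : @IsClosed (Config d A) (configTop d A) carrier
  shift_mem' : ∀ (t : Site d), ∀ x ∈ carrier, shift t x ∈ carrier

/-- A pattern `p`, whose (finite) shape is the finite set `S ⊆ ℤ^d`, belongs to the
language of the subshift `X` if it appears (somewhere) in a point of `X`. -/
def inLanguage {d : ℕ} {A : Type*} (X : Subshift d A) {S : Finset (Site d)}
    (p : S → A) : Prop :=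
  ∃ x ∈ X.carrier, ∃ v : Site d, ∀ s : S, x (v + ↑s) = p s

/-- The box `∏_{i} [1, n i] ⊆ ℤ^d`. -/
noncomputable def boxF (d : ℕ) (n : Fin d → ℕ) : Finset (Site d) :=
  Fintype.piFinset fun i => Finset.Icc (1 : ℤ) (n i)

/-- The cube `[1, N]^d ⊆ ℤ^d`. -/
noncomputable def cubeF (d N : ℕ) : Finset (Site d) := boxF d fun _ => N

/-- The cube `[-n, n]^d ⊆ ℤ^d`. -/
noncomputable def symCube (d : ℕ) (n : ℕ) : Finset (Site d) :=
  Fintype.piFinset fun _ => Finset.Icc (-(n : ℤ)) (n : ℤ)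

/-- The number of patterns of shape `S` in the language of `X`. -/
noncomputable def patternCount {d : ℕ} {A : Type*} (X : Subshift d A)
    (S : Finset (Site d)) : ℕ :=
  Nat.card { p : S → A // inLanguage X p }

/-- Topological entropy of a subshift:
`h(X) = lim_{n₁,…,n_d → ∞} (1/∏ nᵢ) log |L_{∏ [1,nᵢ]}(X)|`. -/
noncomputable def topEnt {d : ℕ} {A : Type*} (X : Subshift d A) : ℝ :=
  Filter.limsup
    (fun n : Fin d → ℕ =>
      Real.log (patternCount X (boxF d n)) / ∏ i, (n i : ℝ))
    Filter.atTop

/-- The cylinder set determined by a pattern `p` with finite shape `S`. -/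
def cylinder {d : ℕ} {A : Type*} {S : Finset (Site d)} (p : S → A) :
    Set (Config d A) :=
  { x | ∀ s : S, x ↑s = p s }

/-- `H_{μ,N}`: the entropy of `μ` with respect to the partition of the configuration
space given by the patterns of shape `[1,N]^d`. -/
noncomputable def blockEntropy {d : ℕ} {A : Type*} (μ : ConfigMeasure d A)
    (N : ℕ) : ℝ :=
  ∑' p : (cubeF d N → A), Real.negMulLog (μ (cylinder p)).toReal

/-- Measure-theoretic entropy `h(μ) = lim_N H_{μ,N}/N^d = inf_N H_{μ,N}/N^d`. -/
noncomputable def measEnt {d : ℕ} {A : Type*} (μ : ConfigMeasure d A) : ℝ :=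
  ⨅ N : ℕ, blockEntropy μ (N + 1) / ((N : ℝ) + 1) ^ d

/-- `μ` is a shift-invariant Borel probability measure on the subshift `X`. -/
def InvariantProbOn {d : ℕ} {A : Type*} (X : Subshift d A)
    (μ : ConfigMeasure d A) : Prop :=
  @IsProbabilityMeasure _ (configMS d A) μ ∧ μ X.carrier = 1 ∧
    ∀ t : Site d,
      @MeasureTheory.Measure.map _ _ (configMS d A) (configMS d A) (shift t) μ = μ

/-- `μ` is a measure of maximal entropy for the subshift `X`. -/
def IsMME {d : ℕ} {A : Type*} (X : Subshift d A) (μ : ConfigMeasure d A) : Prop :=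
  InvariantProbOn X μ ∧ measEnt μ = topEnt X

/-- A subshift is intrinsically ergodic if it has exactly one measure of maximal
entropy. -/
def IntrinsicallyErgodic {d : ℕ} {A : Type*} (X : Subshift d A) : Prop :=
  ∃! μ : ConfigMeasure d A, IsMME X μ

/-- `φ` is a (topological) factor map from the subshift `X` onto the subshift `Y`:
a continuous shift-commuting surjection. -/
def IsFactorMapOn {d : ℕ} {A B : Type*} (X : Subshift d A) (Y : Subshift d B)
    (φ : Config d A → Config d B) : Prop :=
  @ContinuousOn _ _ (configTop d A) (configTop d B) φ X.carrier ∧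
  (∀ x ∈ X.carrier, φ x ∈ Y.carrier) ∧
  (∀ (t : Site d), ∀ x ∈ X.carrier, φ (shift t x) = shift t (φ x)) ∧
  (∀ y ∈ Y.carrier, ∃ x ∈ X.carrier, φ x = y)

/-- The D*-condition: for any `n` there exists `k_n` such that for any `x, y ∈ X`
there is `z ∈ X` agreeing with `x` on `[-n,n]^d` and with `y` off `[-(n+k_n),n+k_n]^d`. -/
def DStarCondition {d : ℕ} {A : Type*} (X : Subshift d A) : Prop :=
  ∀ n : ℕ, ∃ k : ℕ, ∀ x ∈ X.carrier, ∀ y ∈ X.carrier, ∃ z ∈ X.carrier,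
    (∀ t : Site d, (∀ i, |t i| ≤ (n : ℤ)) → z t = x t) ∧
    (∀ t : Site d, ¬ (∀ i, |t i| ≤ (n : ℤ) + (k : ℤ)) → z t = y t)

/-! ### The Widom–Rowlinson shift of finite type -/

/-- The alphabet `{0, +, -}` of the Widom–Rowlinson SFT. -/
inductive WRSymbol : Type
  | zero : WRSymbol
  | plus : WRSymbol
  | minus : WRSymbol
deriving DecidableEq

instance : Fintype WRSymbol :=
  ⟨{WRSymbol.zero, WRSymbol.plus, WRSymbol.minus}, fun x => by cases x <;> simp⟩

/-- The local (pairwise) constraints of the Widom–Rowlinson SFT with interaction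
distances `R₁ ≤ R₂`: nonzero symbols at `ℓ∞`-distance `≤ R₁` are forbidden, and
nonzero symbols of opposite sign at `ℓ∞`-distance `≤ R₂` are forbidden. -/
def WRpair (R₁ R₂ : ℕ) {d : ℕ} (s t : Site d) (u v : WRSymbol) : Prop :=
  (s ≠ t → u ≠ WRSymbol.zero → v ≠ WRSymbol.zero → ∃ i, (R₁ : ℤ) < |s i - t i|) ∧
  (u = WRSymbol.plus → v = WRSymbol.minus → ∃ i, (R₂ : ℤ) < |s i - t i|)

lemma isClosed_pairCond {d : ℕ} {A : Type*} (s t : Site d) (P : A → A → Prop) :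
    @IsClosed (Config d A) (configTop d A) { x | P (x s) (x t) } := by
  letI : TopologicalSpace A := ⊥
  haveI : DiscreteTopology A := ⟨rfl⟩
  have hc : Continuous (fun x : Config d A => ((x s, x t) : A × A)) :=
    Continuous.prodMk (continuous_apply s) (continuous_apply t)
  have h : { x : Config d A | P (x s) (x t) } =
      (fun x : Config d A => ((x s, x t) : A × A)) ⁻¹' { p : A × A | P p.1 p.2 } := rfl
  rw [h]
  exact (isClosed_discrete _).preimage hc

/-- The `ℤ^d` Widom–Rowlinson SFT with interaction distances `R₁` and `R₂`. -/
def WR (d R₁ R₂ : ℕ) : Subshift d WRSymbol where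
  carrier := { x | ∀ s t : Site d, WRpair R₁ R₂ s t (x s) (x t) }
  isClosed' := by
    letI : TopologicalSpace WRSymbol := ⊥
    have h : { x : Config d WRSymbol | ∀ s t : Site d, WRpair R₁ R₂ s t (x s) (x t) } =
        ⋂ (s : Site d) (t : Site d),
          { x : Config d WRSymbol | WRpair R₁ R₂ s t (x s) (x t) } := by
      ext x; simp [Set.mem_iInter]
    rw [h]
    exact isClosed_iInter fun s => isClosed_iInter fun t => isClosed_pairCond s t _
  shift_mem' := by
    intro t0 x hx s t
    have h := hx (s + t0) (t + t0)
    have key : ∀ i : Fin d, (s + t0) i - (t + t0) i = s i - t i := by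
      intro i; simp
    constructor
    · intro hst hu hv
      have hne : s + t0 ≠ t + t0 := fun hc => hst (by
        funext i
        have := congrFun hc i
        simpa using this)
      obtain ⟨i, hi⟩ := h.1 hne hu hv
      exact ⟨i, by rwa [key i] at hi⟩
    · intro hu hv
      obtain ⟨i, hi⟩ := h.2 hu hv
      exact ⟨i, by rwa [key i] at hi⟩


/-! ### Auxiliary development -/

namespace Statement5Aux

open Classical

variable {d : ℕ} {A : Type}

/-- `x` lies in the `ℓ^∞` ball of radius `B`. -/
def nb (B : ℤ) (x : Site d) : Prop := ∀ i, |x i| ≤ B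

lemma nb_zero {B : ℤ} (hB : 0 ≤ B) : nb B (0 : Site d) := fun i => by
  simp [hB]

lemma shift_apply (t : Site d) (x : Config d A) (s : Site d) :
    shift t x s = x (s + t) := rfl

/-- Compactness of the configuration space. -/
lemma config_compactSpace [Finite A] :
    @CompactSpace (Config d A) (configTop d A) := by
  letI : TopologicalSpace A := ⊥
  haveI : DiscreteTopology A := ⟨rfl⟩
  haveI : CompactSpace A := Finite.compactSpace
  exact Pi.compactSpace

lemma config_t2Space [Finite A] :
    @T2Space (Config d A) (configTop d A) := by
  letI : TopologicalSpace A := ⊥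
  haveI : DiscreteTopology A := ⟨rfl⟩
  exact Pi.t2Space

/-- The set of configurations with a prescribed value at a site is closed. -/
lemma continuous_eval (q : Site d) :
    @Continuous (Config d A) A (configTop d A) ⊥ (fun z => z q) := by
  letI : TopologicalSpace A := ⊥
  exact continuous_apply q

lemma isClosed_eval (q : Site d) (v : A) :
    @IsClosed (Config d A) (configTop d A) {z | z q = v} := by
  letI : TopologicalSpace A := ⊥
  haveI : DiscreteTopology A := ⟨rfl⟩
  have h : {z : Config d A | z q = v} = (fun z : Config d A => z q) ⁻¹' {v} := rfl
  rw [h]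
  exact (isClosed_discrete {v}).preimage (continuous_eval q)

lemma isOpen_eval (q : Site d) (v : A) :
    @IsOpen (Config d A) (configTop d A) {z | z q = v} := by
  letI : TopologicalSpace A := ⊥
  haveI : DiscreteTopology A := ⟨rfl⟩
  have h : {z : Config d A | z q = v} = (fun z : Config d A => z q) ⁻¹' {v} := rfl
  rw [h]
  exact (isOpen_discrete {v}).preimage (continuous_eval q)

/-- A map of configuration spaces which is determined by a finite window is
continuous. -/
lemma continuous_of_local {B : Type} (φ : Config d A → Config d B) (R : ℤ)
    (h : ∀ x y : Config d A, ∀ t : Site d,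
      (∀ u, nb R u → x (t + u) = y (t + u)) → φ x t = φ y t) :
    @Continuous _ _ (configTop d A) (configTop d B) φ := by
  letI : TopologicalSpace A := ⊥
  letI : TopologicalSpace B := ⊥
  haveI : DiscreteTopology A := ⟨rfl⟩
  haveI : DiscreteTopology B := ⟨rfl⟩
  refine continuous_pi (fun t => ?_)
  rw [continuous_def]
  intro s _
  rw [isOpen_iff_mem_nhds]
  intro x hx
  set W : Finset (Site d) := Fintype.piFinset fun _ => Finset.Icc (-R) R with hW
  have hUopen : IsOpen (⋂ u ∈ W, {y : Config d A | y (t + u) = x (t + u)}) :=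
    isOpen_biInter_finset fun u _ => isOpen_eval _ _
  refine Filter.mem_of_superset (hUopen.mem_nhds ?_) ?_
  · simp only [Set.mem_iInter]
    intro u _
    rfl
  · intro y hy
    simp only [Set.mem_iInter, Set.mem_setOf_eq] at hy
    have heq : φ y t = φ x t := by
      refine h y x t (fun u hu => hy u ?_)
      rw [hW, Fintype.mem_piFinset]
      intro i
      rw [Finset.mem_Icc, ← abs_le]
      exact hu i
    show φ y t ∈ s
    rw [heq]
    exact hx


lemma abs_lower (x y : ℤ) : |x| - |y| ≤ |x + y| := by
  have h := abs_add_le (x + y) (-y)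
  rw [abs_neg] at h
  have h2 : x + y + -y = x := by ring
  rw [h2] at h
  omega

/-- If a continuous map hits every member of a convergent sequence on a compact
subshift, it hits the limit. -/
lemma surj_limit {B : Type} [Finite A] (X : Subshift d A)
    (φ : Config d A → Config d B)
    (hφ : @Continuous _ _ (configTop d A) (configTop d B) φ)
    (y : Config d B) (wm : ℕ → Config d B)
    (hev : ∀ t : Site d, ∃ M : ℕ, ∀ m, M ≤ m → wm m t = y t)
    (hmem : ∀ m, ∃ x ∈ X.carrier, φ x = wm m) :
    ∃ x ∈ X.carrier, φ x = y := by
  letI : TopologicalSpace A := ⊥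
  letI : TopologicalSpace B := ⊥
  haveI : DiscreteTopology A := ⟨rfl⟩
  haveI : DiscreteTopology B := ⟨rfl⟩
  haveI : CompactSpace A := Finite.compactSpace
  have hφ' : Continuous φ := hφ
  have hXcl : IsClosed X.carrier := X.isClosed'
  have hXc : IsCompact X.carrier := hXcl.isCompact
  have hY0cl : IsClosed (φ '' X.carrier) := (hXc.image hφ').isClosed
  have htend : Filter.Tendsto wm Filter.atTop (nhds y) := by
    rw [tendsto_pi_nhds]
    intro t
    obtain ⟨M, hM⟩ := hev t
    have hev2 : ∀ᶠ m in Filter.atTop, wm m t = y t :=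
      Filter.eventually_atTop.mpr ⟨M, hM⟩
    exact Filter.Tendsto.congr' (hev2.mono fun m h => h.symm) tendsto_const_nhds
  have hycl : y ∈ closure (φ '' X.carrier) :=
    mem_closure_of_tendsto htend (Filter.Eventually.of_forall (fun m => by
      obtain ⟨x, hx, hfx⟩ := hmem m
      exact ⟨x, hx, hfx⟩))
  rw [hY0cl.closure_eq] at hycl
  obtain ⟨x, hxX, hφx⟩ := hycl
  exact ⟨x, hxX, hφx⟩

lemma abs3 (x y z : ℤ) : |x - y - z| ≤ |x| + |y| + |z| := by
  have h1 : |x - y - z| ≤ |x - y| + |z| := by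
    have h := abs_add_le (x - y) (-z)
    rw [abs_neg] at h
    have e : x - y + -z = x - y - z := by ring
    rw [e] at h
    exact h
  have h2 : |x - y| ≤ |x| + |y| := abs_sub x y
  omega

/-- A planting job: reproduce the content of `src` around `0` at position `p`,
on the box of radius `n`. -/
structure Job (d : ℕ) (A : Type) where
  p : Site d
  n : ℕ
  src : Config d A

/-- The control condition of a job. -/
def jctrl (j : Job d A) (z : Config d A) : Prop :=
  ∀ u, nb (j.n : ℤ) u → z (j.p + u) = j.src u

/-- The fat region of a job, given the gap function `K`. -/
def jfat (K : ℕ → ℕ) (j : Job d A) (t : Site d) : Prop :=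
  nb ((j.n : ℤ) + (K j.n : ℤ)) (t - j.p)

/-- Separation of jobs: `b` may be planted after `a`. -/
def jsep (K : ℕ → ℕ) (a b : Job d A) : Prop :=
  ∃ i, ((a.n : ℤ) + (b.n : ℤ) + (K b.n : ℤ)) < |a.p i - b.p i|

section Plant

variable {X : Subshift d A} {K : ℕ → ℕ}

/-- Planting a single pattern at a position, from the D*-condition. -/
lemma plantOne
    (hK : ∀ n : ℕ, ∀ x ∈ X.carrier, ∀ y ∈ X.carrier, ∃ z ∈ X.carrier,
      (∀ t : Site d, (∀ i, |t i| ≤ (n : ℤ)) → z t = x t) ∧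
      (∀ t : Site d, ¬ (∀ i, |t i| ≤ (n : ℤ) + (K n : ℤ)) → z t = y t))
    (n : ℕ) (s : Config d A) (hs : s ∈ X.carrier)
    (y : Config d A) (hy : y ∈ X.carrier) (p : Site d) :
    ∃ z ∈ X.carrier, (∀ u, nb (n : ℤ) u → z (p + u) = s u) ∧
      (∀ t, ¬ nb ((n : ℤ) + (K n : ℤ)) (t - p) → z t = y t) := by
  obtain ⟨z1, hz1, hc, hf⟩ := hK n s hs (shift p y) (X.shift_mem' p y hy)
  refine ⟨shift (-p) z1, X.shift_mem' (-p) z1 hz1, ?_, ?_⟩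
  · intro u hu
    have h1 : shift (-p) z1 (p + u) = z1 (p + u + -p) := rfl
    have h2 : p + u + -p = u := by abel
    rw [h1, h2]
    exact hc u hu
  · intro t ht
    have h1 : shift (-p) z1 t = z1 (t + -p) := rfl
    have h2 : t + -p = t - p := (sub_eq_add_neg t p).symm
    have h3 : z1 (t - p) = shift p y (t - p) := hf _ (by
      intro hcon
      exact ht hcon)
    have h4 : shift p y (t - p) = y (t - p + p) := rfl
    have h5 : t - p + p = t := by abel
    rw [h1, h2, h3, h4, h5]

/-- Iterated planting of a finite list of jobs. -/
lemma multiPlant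
    (hK : ∀ n : ℕ, ∀ x ∈ X.carrier, ∀ y ∈ X.carrier, ∃ z ∈ X.carrier,
      (∀ t : Site d, (∀ i, |t i| ≤ (n : ℤ)) → z t = x t) ∧
      (∀ t : Site d, ¬ (∀ i, |t i| ≤ (n : ℤ) + (K n : ℤ)) → z t = y t)) :
    ∀ (L : List (Job d A)), (∀ j ∈ L, j.src ∈ X.carrier) →
    L.Pairwise (jsep K) → ∀ y ∈ X.carrier,
    ∃ z ∈ X.carrier, (∀ j ∈ L, jctrl j z) ∧
      (∀ t, (∀ j ∈ L, ¬ jfat K j t) → z t = y t) := by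
  intro L
  induction L with
  | nil => exact fun _ _ y hy => ⟨y, hy, by simp, fun t _ => rfl⟩
  | cons a L ih =>
      intro hsrc hpw y hy
      obtain ⟨z1, hz1, hc1, hf1⟩ :=
        plantOne hK a.n a.src (hsrc a (by simp)) y hy a.p
      obtain ⟨z, hz, hcs, hfs⟩ := ih (fun j hj => hsrc j (by simp [hj]))
        (List.Pairwise.of_cons hpw) z1 hz1
      have hsepa : ∀ j ∈ L, jsep K a j := fun j hj =>
        (List.pairwise_cons.mp hpw).1 j hj
      refine ⟨z, hz, ?_, ?_⟩
      · intro j hj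
        rcases List.mem_cons.mp hj with rfl | hj'
        · -- control of the head job
          intro u hu
          have hnotfat : ∀ j' ∈ L, ¬ jfat K j' (j.p + u) := by
            intro j' hj' hfat
            obtain ⟨i, hi⟩ := hsepa j' hj'
            have h1 := hfat i
            have h2 := hu i
            have h3 : (j.p + u - j'.p) i = (j.p i - j'.p i) + u i := by
              simp [sub_eq_add_neg]
              ring
            rw [h3] at h1
            have h4 := abs_lower (j.p i - j'.p i) (u i)
            omega
          rw [hfs _ hnotfat]
          exact hc1 u hu
        · exact hcs j hj'
      · intro t hnf
        rw [hfs t (fun j hj => hnf j (by simp [hj]))]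
        exact hf1 t (hnf a (by simp))

lemma isClosed_imp_eval (P : Prop) (q : Site d) (v : A) :
    @IsClosed (Config d A) (configTop d A) {z | P → z q = v} := by
  by_cases hP : P
  · simp only [hP, forall_true_left]
    exact isClosed_eval q v
  · have h : {z : Config d A | P → z q = v} = Set.univ := by
      ext z; simp [hP]
    rw [h]
    exact @isClosed_univ _ (configTop d A)

/-- Planting a finite list of jobs together with an infinite "field" of
single-site jobs, by compactness. -/
lemma fipPlant [Finite A]
    (hK : ∀ n : ℕ, ∀ x ∈ X.carrier, ∀ y ∈ X.carrier, ∃ z ∈ X.carrier,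
      (∀ t : Site d, (∀ i, |t i| ≤ (n : ℤ)) → z t = x t) ∧
      (∀ t : Site d, ¬ (∀ i, |t i| ≤ (n : ℤ) + (K n : ℤ)) → z t = y t))
    (L : List (Job d A)) (hsrc : ∀ j ∈ L, j.src ∈ X.carrier)
    (hpw : L.Pairwise (jsep K))
    (Φ : Set (Site d)) (bs : Config d A) (hbs : bs ∈ X.carrier)
    (hLΦ : ∀ j ∈ L, ∀ h ∈ Φ, jsep K j ⟨h, 0, bs⟩)
    (hΦΦ : ∀ h ∈ Φ, ∀ h' ∈ Φ, h ≠ h' → jsep K ⟨h, 0, bs⟩ ⟨h', 0, bs⟩) :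
    ∃ z ∈ X.carrier, (∀ j ∈ L, jctrl j z) ∧ (∀ h ∈ Φ, z h = bs 0) := by
  classical
  letI : TopologicalSpace (Config d A) := configTop d A
  haveI : CompactSpace (Config d A) := config_compactSpace
  set C : Finset (Site d) → Set (Config d A) := fun F =>
    {z | z ∈ X.carrier ∧ (∀ j ∈ L, jctrl j z) ∧ ∀ h ∈ F, h ∈ Φ → z h = bs 0}
    with hC
  have hne : ∀ F, (C F).Nonempty := by
    intro F
    set Fl := F.filter (fun h => h ∈ Φ) with hFl
    set L2 := Fl.toList.map (fun h => (⟨h, 0, bs⟩ : Job d A)) with hL2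
    have hmem2 : ∀ j ∈ L2, ∃ h ∈ Φ, j = ⟨h, 0, bs⟩ := by
      intro j hj
      rw [hL2, List.mem_map] at hj
      obtain ⟨h, hh, rfl⟩ := hj
      rw [Finset.mem_toList, hFl, Finset.mem_filter] at hh
      exact ⟨h, hh.2, rfl⟩
    have hpw2 : (L ++ L2).Pairwise (jsep K) := by
      rw [List.pairwise_append]
      refine ⟨hpw, ?_, ?_⟩
      · rw [hL2, List.pairwise_map]
        have hnd : Fl.toList.Pairwise (· ≠ ·) := Fl.nodup_toList
        refine hnd.imp_of_mem ?_
        intro h h' hh hh' hne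
        rw [Finset.mem_toList, hFl, Finset.mem_filter] at hh hh'
        exact hΦΦ h hh.2 h' hh'.2 hne
      · intro a ha b hb
        obtain ⟨h, hh, rfl⟩ := hmem2 b hb
        exact hLΦ a ha h hh
    obtain ⟨z, hz, hctrl, -⟩ := multiPlant hK (L ++ L2)
      (by
        intro j hj
        rcases List.mem_append.mp hj with hj | hj
        · exact hsrc j hj
        · obtain ⟨h, hh, rfl⟩ := hmem2 j hj
          exact hbs)
      hpw2 bs hbs
    refine ⟨z, hz, fun j hj => hctrl j (List.mem_append_left _ hj), ?_⟩
    intro h hhF hhΦ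
    have hjob : (⟨h, 0, bs⟩ : Job d A) ∈ L ++ L2 := by
      refine List.mem_append_right _ ?_
      rw [hL2, List.mem_map]
      refine ⟨h, ?_, rfl⟩
      rw [Finset.mem_toList, hFl, Finset.mem_filter]
      exact ⟨hhF, hhΦ⟩
    have := hctrl _ hjob 0 (nb_zero (by positivity))
    simpa using this
  have hclosed : ∀ F, IsClosed (C F) := by
    intro F
    have heq : C F = X.carrier ∩
        ((⋂ j ∈ L, ⋂ u : Site d, {z : Config d A | nb (j.n : ℤ) u → z (j.p + u) = j.src u}) ∩
         (⋂ h ∈ F, {z : Config d A | h ∈ Φ → z h = bs 0})) := by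
      ext z
      simp only [hC, Set.mem_setOf_eq, Set.mem_inter_iff, Set.mem_iInter]
      constructor
      · rintro ⟨h1, h2, h3⟩
        exact ⟨h1, fun j hj u => h2 j hj u, fun h hh => h3 h hh⟩
      · rintro ⟨h1, h2, h3⟩
        exact ⟨h1, fun j hj u => h2 j hj u, fun h hh => h3 h hh⟩
    rw [heq]
    refine X.isClosed'.inter (IsClosed.inter ?_ ?_)
    · exact isClosed_iInter fun j => isClosed_iInter fun hj =>
        isClosed_iInter fun u => isClosed_imp_eval _ _ _
    · exact isClosed_iInter fun h => isClosed_iInter fun hh =>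
        isClosed_imp_eval _ _ _
  have hdir : Directed (· ⊇ ·) C := by
    intro F F'
    refine ⟨F ∪ F', ?_, ?_⟩
    · rintro z ⟨h1, h2, h3⟩
      exact ⟨h1, h2, fun h hh => h3 h (Finset.mem_union_left _ hh)⟩
    · rintro z ⟨h1, h2, h3⟩
      exact ⟨h1, h2, fun h hh => h3 h (Finset.mem_union_right _ hh)⟩
  have hint := IsCompact.nonempty_iInter_of_directed_nonempty_isCompact_isClosed
    C hdir hne (fun F => (hclosed F).isCompact) hclosed
  obtain ⟨z, hz⟩ := hint
  rw [Set.mem_iInter] at hz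
  have h0 := hz ∅
  refine ⟨z, h0.1, h0.2.1, ?_⟩
  intro h hh
  exact (hz {h}).2.2 h (Finset.mem_singleton_self h) hh

end Plant


section Coverage

/-- There is `m ∈ [1, κ+2]` congruent to `x` mod `κ+2`. -/
lemma exists_m (κ : ℕ) (x : ℤ) :
    ∃ m : ℤ, 1 ≤ m ∧ m ≤ (κ : ℤ) + 2 ∧ ((κ : ℤ) + 2) ∣ (x - m) := by
  have hpos : (0:ℤ) < (κ:ℤ) + 2 := by positivity
  refine ⟨(x - 1) % ((κ:ℤ) + 2) + 1, ?_, ?_, ?_⟩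
  · have := Int.emod_nonneg (x - 1) (by omega : ((κ:ℤ) + 2) ≠ 0)
    omega
  · have := Int.emod_lt_of_pos (x - 1) hpos
    omega
  · refine ⟨(x - 1) / ((κ:ℤ) + 2), ?_⟩
    have h := Int.mul_ediv_add_emod (x - 1) ((κ:ℤ) + 2)
    linarith

/-- Choice of a "killing" displacement `g`: each coordinate a multiple of
`κ+1` of prescribed sign and magnitude in `[κ+1, (κ+1)(κ+2)]`, such that
`t + g` lies in the lattice `((κ+2)ℤ)^d`. -/
lemma exists_g (κ : ℕ) (t : Site d) (pol : Fin d → Prop) :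
    ∃ g : Site d,
      (∀ i, ((κ:ℤ) + 2) ∣ (t i + g i)) ∧
      (∀ i, ((κ:ℤ) + 1) ∣ g i) ∧
      (∀ i, ((κ:ℤ) + 1) ≤ |g i| ∧ |g i| ≤ ((κ:ℤ) + 1) * ((κ:ℤ) + 2)) ∧
      (∀ i, if pol i then ((κ:ℤ) + 1) ≤ g i else g i ≤ -(((κ:ℤ) + 1))) := by
  have hc : ∀ i, ∃ gi : ℤ, ((κ:ℤ) + 2) ∣ (t i + gi) ∧ ((κ:ℤ) + 1) ∣ gi ∧
      (((κ:ℤ) + 1) ≤ |gi| ∧ |gi| ≤ ((κ:ℤ) + 1) * ((κ:ℤ) + 2)) ∧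
      (if pol i then ((κ:ℤ) + 1) ≤ gi else gi ≤ -(((κ:ℤ) + 1))) := by
    intro i
    have h1κ : (1:ℤ) ≤ (κ:ℤ) + 1 := by omega
    by_cases hpol : pol i
    case pos =>
        obtain ⟨m, hm1, hm2, hm3⟩ := exists_m κ (t i)
        refine ⟨((κ:ℤ) + 1) * m, ?_, ⟨m, rfl⟩, ⟨?_, ?_⟩, ?_⟩
        · -- t i + (κ+1) m = (t i - m) + (κ+2) m
          have : t i + ((κ:ℤ) + 1) * m = (t i - m) + ((κ:ℤ) + 2) * m := by ring
          rw [this]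
          exact dvd_add hm3 ⟨m, rfl⟩
        · have hnn : 0 ≤ ((κ:ℤ) + 1) * m := by positivity
          rw [abs_of_nonneg hnn]
          nlinarith
        · have hnn : 0 ≤ ((κ:ℤ) + 1) * m := by positivity
          rw [abs_of_nonneg hnn]
          nlinarith
        · simp only [if_pos hpol]
          nlinarith
    case neg =>
        obtain ⟨m, hm1, hm2, hm3⟩ := exists_m κ (-(t i))
        refine ⟨-(((κ:ℤ) + 1) * m), ?_, ⟨-m, by ring⟩, ⟨?_, ?_⟩, ?_⟩
        · -- t i - (κ+1) m = -((-(t i)) - m) - (κ+2-? ) ...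
          have : t i + -(((κ:ℤ) + 1) * m) = -((-(t i)) - m) - ((κ:ℤ) + 2) * m := by
            ring
          rw [this]
          exact dvd_sub (dvd_neg.mpr hm3) ⟨m, rfl⟩
        · have hnn : 0 ≤ ((κ:ℤ) + 1) * m := by positivity
          rw [abs_neg, abs_of_nonneg hnn]
          nlinarith
        · have hnn : 0 ≤ ((κ:ℤ) + 1) * m := by positivity
          rw [abs_neg, abs_of_nonneg hnn]
          nlinarith
        · simp only [if_neg hpol]
          nlinarith
  choose g hg using hc
  exact ⟨g, fun i => (hg i).1, fun i => (hg i).2.1, fun i => (hg i).2.2.1,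
    fun i => (hg i).2.2.2⟩

/-- Abstract "kill" lemma: if `pat` has the value `a` at all `(κ+1)`-lattice
points of the `(κ+1)(κ+2)`-box, and around `t` the configuration `x` has the
value `bb ≠ a` at all available `(κ+2)`-lattice sites (with displacement signs
given by an arbitrary policy `pol`), then `pat` does not occur at `t`. -/
lemma kill (κ : ℕ) {a bb : A} (hab : a ≠ bb) (pat : Config d A)
    (hpat : ∀ g : Site d, (∀ i, ((κ:ℤ) + 1) ∣ g i) →
      nb (((κ:ℤ) + 1) * ((κ:ℤ) + 2)) g → pat g = a)
    (x : Config d A) (t : Site d) (pol : Fin d → Prop)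
    (hav : ∀ g : Site d, (∀ i, ((κ:ℤ) + 2) ∣ (t i + g i)) →
      (∀ i, ((κ:ℤ) + 1) ≤ |g i| ∧ |g i| ≤ ((κ:ℤ) + 1) * ((κ:ℤ) + 2)) →
      (∀ i, if pol i then ((κ:ℤ) + 1) ≤ g i else g i ≤ -(((κ:ℤ) + 1))) →
      x (t + g) = bb) :
    ¬ (∀ u, nb (((κ:ℤ) + 1) * ((κ:ℤ) + 2)) u → x (t + u) = pat u) := by
  obtain ⟨g, h1, h2, h3, h4⟩ := exists_g κ t pol
  intro hocc
  have e1 := hocc g (fun i => (h3 i).2)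
  have e2 := hav g h1 h3 h4
  rw [e1, hpat g h2 (fun i => (h3 i).2)] at e2
  exact hab e2

end Coverage


/-! ### The main construction -/

/-- All basic data extracted from a nontrivial subshift with the D*-condition. -/
structure Setup (d : ℕ) (A : Type) where
  hd : 0 < d
  X : Subshift d A
  K : ℕ → ℕ
  hK : ∀ n : ℕ, ∀ x ∈ X.carrier, ∀ y ∈ X.carrier, ∃ z ∈ X.carrier,
      (∀ t : Site d, (∀ i, |t i| ≤ (n : ℤ)) → z t = x t) ∧
      (∀ t : Site d, ¬ (∀ i, |t i| ≤ (n : ℤ) + (K n : ℤ)) → z t = y t)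
  a : A
  bb : A
  hab : a ≠ bb
  xa : Config d A
  xb : Config d A
  hxa : xa ∈ X.carrier
  hxb : xb ∈ X.carrier
  hxa0 : xa 0 = a
  hxb0 : xb 0 = bb

namespace Setup

variable {d : ℕ} {A : Type} (S : Setup d A)

def κ : ℕ := S.K 0
def r : ℕ := (S.κ + 1) * (S.κ + 2)
def kr : ℕ := S.K S.r
def γ : ℕ := S.κ + 2 * S.r + 2
def ρ1 : ℕ := 2 * S.r + S.kr + 2 * S.γ + 2
def ρ : Site d := fun i => if (i : ℕ) = 0 then (S.ρ1 : ℤ) else 0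
def γ' : ℕ := S.γ + S.ρ1 + S.r + S.κ + 2
def Λ : ℕ := 2 * S.γ' + 1
def r' : ℕ := S.Λ + S.γ' + S.κ + 6 * S.r + S.ρ1 + 10
def k' : ℕ := S.K S.r'
def N' : ℕ := 4 * (S.r' + S.k' + S.Λ + S.γ' + S.κ + S.r + 10)

/-- Membership in the lattice `((κ+2)ℤ)^d`. -/
def isH (h : Site d) : Prop := ∀ i, ((S.κ : ℤ) + 2) ∣ h i

lemma rcast : ((S.r : ℕ) : ℤ) = ((S.κ : ℤ) + 1) * ((S.κ : ℤ) + 2) := by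
  rw [r]; push_cast; ring

lemma rge : (S.κ : ℤ) + 1 ≤ (S.r : ℤ) := by
  rw [S.rcast]; nlinarith [Int.ofNat_nonneg S.κ]

lemma nb_rho : nb (S.ρ1 : ℤ) S.ρ := by
  intro i
  rw [ρ]
  by_cases h : (i : ℕ) = 0 <;> simp [h]

lemma rho_at : S.ρ ⟨0, S.hd⟩ = (S.ρ1 : ℤ) := by simp [ρ]

lemma gcast : (S.γ:ℤ) = (S.κ:ℤ) + 2*(S.r:ℤ) + 2 := by
  unfold γ; push_cast; ring

lemma p1cast : (S.ρ1:ℤ) = 2*(S.r:ℤ) + (S.kr:ℤ) + 2*(S.γ:ℤ) + 2 := by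
  unfold ρ1; push_cast; ring

lemma g'cast : (S.γ':ℤ) = (S.γ:ℤ) + (S.ρ1:ℤ) + (S.r:ℤ) + (S.κ:ℤ) + 2 := by
  unfold γ'; push_cast; ring

lemma Lcast : (S.Λ:ℤ) = 2*(S.γ':ℤ) + 1 := by
  unfold Λ; push_cast; ring

lemma r'cast : (S.r':ℤ) = (S.Λ:ℤ) + (S.γ':ℤ) + (S.κ:ℤ) + 6*(S.r:ℤ) + (S.ρ1:ℤ) + 10 := by
  unfold r'; push_cast; ring

lemma N'cast : (S.N':ℤ) = 4*((S.r':ℤ) + (S.k':ℤ) + (S.Λ:ℤ) + (S.γ':ℤ) + (S.κ:ℤ) + (S.r:ℤ) + 10) := by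
  unfold N'; push_cast; ring

lemma nb_mono {B B' : ℤ} (h : B ≤ B') {x : Site d} (hx : nb B x) : nb B' x :=
  fun i => le_trans (hx i) h

lemma nb_neg {B : ℤ} {x : Site d} (hx : nb B x) : nb B (-x) := by
  intro i
  rw [Pi.neg_apply, abs_neg]
  exact hx i

lemma nb_add {B C : ℤ} {x y : Site d} (hx : nb B x) (hy : nb C y) :
    nb (B + C) (x + y) := by
  intro i
  calc |(x + y) i| = |x i + y i| := rfl
    _ ≤ |x i| + |y i| := abs_add_le _ _
    _ ≤ B + C := add_le_add (hx i) (hy i)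

lemma nb_sub {B C : ℤ} {x y : Site d} (hx : nb B x) (hy : nb C y) :
    nb (B + C) (x - y) := by
  rw [sub_eq_add_neg]
  exact nb_add hx (nb_neg hy)

end Setup

/-- The reference points of the construction: the pattern point `pinf`,
and the two gadget points `xp` (plus) and `xm` (minus). -/
structure Pts {d : ℕ} {A : Type} (S : Setup d A) where
  pinf : Config d A
  xp : Config d A
  xm : Config d A
  hpinf : ∀ g : Site d, (∀ i, ((S.κ : ℤ) + 1) ∣ g i) → nb (S.r : ℤ) g →
    pinf g = S.a
  hxpX : xp ∈ S.X.carrier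
  hxmX : xm ∈ S.X.carrier
  hxpc : ∀ u, nb (S.r : ℤ) u → xp u = pinf u
  hxpf : ∀ h : Site d, S.isH h → ¬ nb ((S.κ : ℤ) + (S.r : ℤ)) h → xp h = S.bb
  hxmc : ∀ u, nb (S.r : ℤ) u → xm u = pinf u
  hxmc' : ∀ u, nb (S.r : ℤ) u → xm (S.ρ + u) = pinf u
  hxmf : ∀ h : Site d, S.isH h → ¬ nb ((S.κ : ℤ) + (S.r : ℤ)) h →
    ¬ nb ((S.κ : ℤ) + (S.r : ℤ)) (h - S.ρ) → xm h = S.bb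

section ExistsPts

variable {d : ℕ} {A : Type} [Finite A] (S : Setup d A)

lemma exists_pts : Nonempty (Pts S) := by
  classical
  -- Step 1: the pattern point pinf
  set Gfin : Finset (Site d) := Fintype.piFinset
    (fun _ => (Finset.Icc (-((S.κ:ℤ)+2)) ((S.κ:ℤ)+2)).image
      (fun m => ((S.κ:ℤ)+1) * m)) with hGfin
  have hGmem : ∀ g : Site d, (∀ i, ((S.κ:ℤ)+1) ∣ g i) → nb (S.r : ℤ) g →
      g ∈ Gfin := by
    intro g hdvd hnb
    rw [hGfin, Fintype.mem_piFinset]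
    intro i
    obtain ⟨m, hm⟩ := hdvd i
    rw [Finset.mem_image]
    refine ⟨m, ?_, hm.symm⟩
    rw [Finset.mem_Icc]
    have h1 := hnb i
    rw [hm, S.rcast] at h1
    have hκ : (0:ℤ) < (S.κ:ℤ) + 1 := by positivity
    rw [abs_mul, abs_of_pos hκ] at h1
    have h2 : |m| ≤ (S.κ:ℤ) + 2 := by
      nlinarith [abs_nonneg m]
    rw [abs_le] at h2
    exact h2
  have hpex : ∃ p ∈ S.X.carrier,
      ∀ g : Site d, (∀ i, ((S.κ:ℤ)+1) ∣ g i) → nb (S.r : ℤ) g → p g = S.a := by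
    set L : List (Job d A) := Gfin.toList.map (fun g => ⟨g, 0, S.xa⟩) with hL
    have hpw : L.Pairwise (jsep S.K) := by
      rw [hL, List.pairwise_map]
      refine (Gfin.nodup_toList).imp_of_mem ?_
      intro g g' hg hg' hne
      obtain ⟨i, hi⟩ := Function.ne_iff.mp hne
      refine ⟨i, ?_⟩
      rw [Finset.mem_toList, hGfin, Fintype.mem_piFinset] at hg hg'
      obtain ⟨m, -, hm⟩ := Finset.mem_image.mp (hg i)
      obtain ⟨m', -, hm'⟩ := Finset.mem_image.mp (hg' i)
      have hmm : m ≠ m' := by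
        rintro rfl
        exact hi (hm.symm ▸ hm'.symm ▸ rfl)
      have h1 : g i - g' i = ((S.κ:ℤ)+1) * (m - m') := by
        rw [← hm, ← hm']; ring
      have h2 : (1:ℤ) ≤ |m - m'| := by
        rcases lt_or_gt_of_ne (sub_ne_zero.mpr hmm) with h | h
        · rw [abs_of_neg h]; omega
        · rw [abs_of_pos h]; omega
      have h3 : (0:ℤ) < (S.κ:ℤ)+1 := by positivity
      show ((0:ℕ):ℤ) + ((0:ℕ):ℤ) + (S.K 0 : ℤ) < |g i - g' i|
      push_cast
      rw [h1, abs_mul, abs_of_pos h3]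
      have hκ : (S.K 0 : ℤ) = (S.κ : ℤ) := rfl
      nlinarith [mul_le_mul_of_nonneg_left h2 (le_of_lt h3)]
    obtain ⟨p, hp, hctrl, -⟩ := multiPlant S.hK L
      (by intro j hj; rw [hL, List.mem_map] at hj; obtain ⟨g, -, rfl⟩ := hj;
          exact S.hxa)
      hpw S.xa S.hxa
    refine ⟨p, hp, ?_⟩
    intro g hdvd hnb
    have hjob : (⟨g, 0, S.xa⟩ : Job d A) ∈ L := by
      rw [hL, List.mem_map]
      exact ⟨g, Finset.mem_toList.mpr (hGmem g hdvd hnb), rfl⟩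
    have := hctrl _ hjob 0 (nb_zero le_rfl)
    simpa [S.hxa0] using this
  obtain ⟨pinf, hpinfX, hpinf⟩ := hpex
  -- separation of lattice sites
  have hsepH : ∀ h h' : Site d, S.isH h → S.isH h' → h ≠ h' →
      jsep S.K (⟨h, 0, S.xb⟩ : Job d A) ⟨h', 0, S.xb⟩ := by
    intro h h' hh hh' hne
    obtain ⟨i, hi⟩ := Function.ne_iff.mp hne
    refine ⟨i, ?_⟩
    show ((0:ℕ):ℤ) + ((0:ℕ):ℤ) + (S.K 0 : ℤ) < |h i - h' i|
    have hdvd : ((S.κ:ℤ) + 2) ∣ (h i - h' i) := dvd_sub (hh i) (hh' i)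
    have hne2 : h i - h' i ≠ 0 := sub_ne_zero.mpr hi
    have hle : (S.κ:ℤ) + 2 ≤ |h i - h' i| :=
      Int.le_of_dvd (abs_pos.mpr hne2) ((dvd_abs _ _).mpr hdvd)
    have : (S.K 0 : ℤ) = (S.κ:ℤ) := rfl
    push_cast
    omega
  -- Step 2: the plus gadget point xp
  have hxpex : ∃ xp ∈ S.X.carrier,
      (∀ u, nb (S.r:ℤ) u → xp u = pinf u) ∧
      (∀ h : Site d, S.isH h → ¬ nb ((S.κ:ℤ) + (S.r:ℤ)) h → xp h = S.bb) := by
    set Φ : Set (Site d) := {h | S.isH h ∧ ¬ nb ((S.κ:ℤ) + (S.r:ℤ)) h} with hΦ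
    have hsep1 : ∀ j ∈ [(⟨0, S.r, pinf⟩ : Job d A)], ∀ h ∈ Φ,
        jsep S.K j ⟨h, 0, S.xb⟩ := by
      intro j hj h hh
      rw [List.mem_singleton] at hj
      subst hj
      obtain ⟨-, hnb⟩ := hh
      rw [nb] at hnb; push_neg at hnb
      obtain ⟨i, hi⟩ := hnb
      refine ⟨i, ?_⟩
      show (S.r:ℤ) + ((0:ℕ):ℤ) + (S.K 0 : ℤ) < |(0:Site d) i - h i|
      have h0 : (0:Site d) i - h i = -(h i) := by simp
      rw [h0, abs_neg]
      have : (S.K 0 : ℤ) = (S.κ:ℤ) := rfl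
      push_cast
      omega
    obtain ⟨xp, hxpX, hctrl, hfield⟩ := fipPlant S.hK [⟨0, S.r, pinf⟩]
      (by simp only [List.mem_singleton]; rintro j rfl; exact hpinfX)
      (List.pairwise_singleton _ _) Φ S.xb S.hxb hsep1
      (fun h hh h' hh' hne => hsepH h h' hh.1 hh'.1 hne)
    refine ⟨xp, hxpX, ?_, ?_⟩
    · intro u hu
      have := hctrl _ (List.mem_singleton_self _) u hu
      simpa using this
    · intro h hisH hnb
      have := hfield h ⟨hisH, hnb⟩
      rw [this, S.hxb0]
  obtain ⟨xp, hxpX, hxpc, hxpf⟩ := hxpex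
  -- Step 3: the minus gadget point xm
  have hxmex : ∃ xm ∈ S.X.carrier,
      (∀ u, nb (S.r:ℤ) u → xm u = pinf u) ∧
      (∀ u, nb (S.r:ℤ) u → xm (S.ρ + u) = pinf u) ∧
      (∀ h : Site d, S.isH h → ¬ nb ((S.κ:ℤ) + (S.r:ℤ)) h →
        ¬ nb ((S.κ:ℤ) + (S.r:ℤ)) (h - S.ρ) → xm h = S.bb) := by
    set Φ : Set (Site d) := {h | S.isH h ∧ ¬ nb ((S.κ:ℤ) + (S.r:ℤ)) h ∧
      ¬ nb ((S.κ:ℤ) + (S.r:ℤ)) (h - S.ρ)} with hΦ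
    set L : List (Job d A) := [⟨0, S.r, pinf⟩, ⟨S.ρ, S.r, pinf⟩] with hL
    have hpwL : L.Pairwise (jsep S.K) := by
      rw [hL]
      refine List.pairwise_cons.mpr ⟨?_, List.pairwise_singleton _ _⟩
      intro j hj
      rw [List.mem_singleton] at hj
      subst hj
      refine ⟨⟨0, S.hd⟩, ?_⟩
      show (S.r:ℤ) + (S.r:ℤ) + (S.K S.r : ℤ) < |(0:Site d) ⟨0, S.hd⟩ - S.ρ ⟨0, S.hd⟩|
      rw [S.rho_at]
      have h0 : (0:Site d) ⟨0, S.hd⟩ - (S.ρ1:ℤ) = -(S.ρ1:ℤ) := by simp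
      rw [h0, abs_neg, abs_of_nonneg (by positivity)]
      have h1 : (S.K S.r : ℤ) = (S.kr : ℤ) := rfl
      have h2 : (S.ρ1 : ℕ) = 2 * S.r + S.kr + 2 * S.γ + 2 := rfl
      push_cast [h1, h2]
      omega
    have hsepL : ∀ j ∈ L, ∀ h ∈ Φ, jsep S.K j ⟨h, 0, S.xb⟩ := by
      intro j hj h hh
      obtain ⟨hisH, hnb1, hnb2⟩ := hh
      have hKκ : (S.K 0 : ℤ) = (S.κ:ℤ) := rfl
      rw [hL] at hj
      rcases List.mem_cons.mp hj with rfl | hj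
      · rw [nb] at hnb1; push_neg at hnb1
        obtain ⟨i, hi⟩ := hnb1
        refine ⟨i, ?_⟩
        show (S.r:ℤ) + ((0:ℕ):ℤ) + (S.K 0 : ℤ) < |(0:Site d) i - h i|
        have h0 : (0:Site d) i - h i = -(h i) := by simp
        rw [h0, abs_neg]
        push_cast [hKκ]
        omega
      · rw [List.mem_singleton] at hj
        subst hj
        rw [nb] at hnb2; push_neg at hnb2
        obtain ⟨i, hi⟩ := hnb2
        refine ⟨i, ?_⟩
        show (S.r:ℤ) + ((0:ℕ):ℤ) + (S.K 0 : ℤ) < |S.ρ i - h i|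
        have h0 : |S.ρ i - h i| = |(h - S.ρ) i| := by
          rw [Pi.sub_apply, abs_sub_comm]
        rw [h0]
        push_cast [hKκ]
        omega
    obtain ⟨xm, hxmX, hctrl, hfield⟩ := fipPlant S.hK L
      (by
        intro j hj
        rw [hL] at hj
        rcases List.mem_cons.mp hj with rfl | hj
        · exact hpinfX
        · rw [List.mem_singleton] at hj; subst hj; exact hpinfX)
      hpwL Φ S.xb S.hxb hsepL
      (fun h hh h' hh' hne => hsepH h h' hh.1 hh'.1 hne)
    refine ⟨xm, hxmX, ?_, ?_, ?_⟩
    · intro u hu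
      have := hctrl ⟨0, S.r, pinf⟩ (by rw [hL]; simp) u hu
      simpa using this
    · intro u hu
      exact hctrl ⟨S.ρ, S.r, pinf⟩ (by rw [hL]; simp) u hu
    · intro h hisH hnb1 hnb2
      have := hfield h ⟨hisH, hnb1, hnb2⟩
      rw [this, S.hxb0]
  obtain ⟨xm, hxmX, hxmc, hxmc', hxmf⟩ := hxmex
  exact ⟨⟨pinf, xp, xm, hpinf, hxpX, hxmX, hxpc, hxpf, hxmc, hxmc', hxmf⟩⟩

end ExistsPts


namespace Pts

variable {d : ℕ} {A : Type} {S : Setup d A} (P : Pts S)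

open Setup

/-- The gadget point associated to a sign. -/
def gad : WRSymbol → Config d A
  | WRSymbol.plus => P.xp
  | _ => P.xm

lemma gadX : ∀ s, P.gad s ∈ S.X.carrier := by
  intro s
  cases s
  · exact P.hxmX
  · exact P.hxpX
  · exact P.hxmX

/-- Occurrence of the core pattern at `t` in `x`. -/
def occ (x : Config d A) (t : Site d) : Prop :=
  ∀ u, nb (S.r : ℤ) u → x (t + u) = P.pinf u

/-- The occurrence cluster of the gadget of sign `s`. -/
def G (s : WRSymbol) (u : Site d) : Prop := P.occ (P.gad s) u

lemma G_zero (s : WRSymbol) : P.G s 0 := by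
  intro u hu
  rw [zero_add]
  cases s
  · exact P.hxmc u hu
  · exact P.hxpc u hu
  · exact P.hxmc u hu

lemma G_rho : P.G WRSymbol.minus S.ρ := by
  intro u hu
  exact P.hxmc' u hu

/-- The kill lemma, phrased for `occ`. -/
lemma not_occ (x : Config d A) (t : Site d) (pol : Fin d → Prop)
    (hav : ∀ g : Site d, (∀ i, ((S.κ:ℤ) + 2) ∣ (t i + g i)) →
      (∀ i, ((S.κ:ℤ) + 1) ≤ |g i| ∧ |g i| ≤ (S.r : ℤ)) →
      (∀ i, if pol i then ((S.κ:ℤ) + 1) ≤ g i else g i ≤ -(((S.κ:ℤ) + 1))) →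
      x (t + g) = S.bb) :
    ¬ P.occ x t := by
  intro hocc
  refine kill S.κ S.hab P.pinf
    (fun g hdvd hnb => P.hpinf g hdvd (by rw [S.rcast]; exact hnb))
    x t pol
    (fun g h1 h2 h3 => hav g h1 (fun i => by rw [← S.rcast] at h2; exact h2 i) h3)
    (fun u hu => hocc u (by rw [S.rcast]; exact hu))

lemma Gp_bound {u : Site d} (h : P.G WRSymbol.plus u) : nb (S.γ : ℤ) u := by
  by_contra hnb
  rw [nb] at hnb; push_neg at hnb
  obtain ⟨i0, hi0⟩ := hnb
  refine P.not_occ P.xp u (fun _ => True) ?_ h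
  intro g hdvd hbnd _
  refine P.hxpf (u + g) (fun i => hdvd i) ?_
  intro hcon
  have h1 := hcon i0
  have h2 := abs_lower (u i0) (g i0)
  have h3 := (hbnd i0).2
  have h4 := S.gcast
  have h5 : (u + g) i0 = u i0 + g i0 := rfl
  rw [h5] at h1
  omega

lemma Gm_bound {u : Site d} (h : P.G WRSymbol.minus u) :
    nb (S.γ : ℤ) u ∨ nb (S.γ : ℤ) (u - S.ρ) := by
  by_contra hnb
  push_neg at hnb
  obtain ⟨hnb1, hnb2⟩ := hnb
  rw [nb] at hnb1 hnb2; push_neg at hnb1 hnb2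
  obtain ⟨i0, hi0⟩ := hnb1
  obtain ⟨i1, hi1⟩ := hnb2
  refine P.not_occ P.xm u (fun _ => True) ?_ h
  intro g hdvd hbnd _
  refine P.hxmf (u + g) (fun i => hdvd i) ?_ ?_
  · intro hcon
    have h1 := hcon i0
    have h2 := abs_lower (u i0) (g i0)
    have h3 := (hbnd i0).2
    have h4 := S.gcast
    have h5 : (u + g) i0 = u i0 + g i0 := rfl
    rw [h5] at h1
    omega
  · intro hcon
    have h1 := hcon i1
    have h2 := abs_lower ((u - S.ρ) i1) (g i1)
    have h3 := (hbnd i1).2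
    have h4 := S.gcast
    have h5 : (u + g - S.ρ) i1 = (u - S.ρ) i1 + g i1 := by
      simp only [Pi.add_apply, Pi.sub_apply]; ring
    rw [h5] at h1
    omega

lemma G_bound {u : Site d} (s : WRSymbol) (h : P.G s u) :
    nb ((S.γ : ℤ) + (S.ρ1 : ℤ)) u := by
  have hρ := S.nb_rho
  cases s
  · rcases P.Gm_bound h with h1 | h1
    · exact nb_mono (by omega) h1
    · intro i
      have h2 := (nb_add h1 hρ) i
      have h3 : (u - S.ρ + S.ρ) = u := by abel
      rw [h3] at h2
      exact h2
  · exact nb_mono (by omega) (P.Gp_bound h)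
  · rcases P.Gm_bound h with h1 | h1
    · exact nb_mono (by omega) h1
    · intro i
      have h2 := (nb_add h1 hρ) i
      have h3 : (u - S.ρ + S.ρ) = u := by abel
      rw [h3] at h2
      exact h2

end Pts


section XW

open Setup WRSymbol

variable {d : ℕ} {A : Type} [Finite A] {S : Setup d A} (P : Pts S)
variable (w : Config d WRSymbol) (R₁ : ℕ)

/-- Existence of the encoding point of a WR configuration with finitely many
particles. -/
lemma exists_xw
    (hR : (S.N' : ℤ) ≤ (R₁ : ℤ))
    (hsep : ∀ v v' : Site d, w v ≠ zero → w v' ≠ zero → v ≠ v' →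
      ∃ i, (R₁ : ℤ) < |v i - v' i|)
    (hfin : {v | w v ≠ zero}.Finite) :
    ∃ xw ∈ S.X.carrier,
      (∀ v, w v ≠ zero → ∀ u, nb (S.r' : ℤ) u → xw (v + u) = P.gad (w v) u) ∧
      (∀ h : Site d, S.isH h →
        (∀ v, w v ≠ zero → ¬ nb ((S.r' : ℤ) + (S.κ : ℤ)) (h - v)) →
        xw h = S.bb) := by
  classical
  set L : List (Job d A) :=
    hfin.toFinset.toList.map (fun v => ⟨v, S.r', P.gad (w v)⟩) with hL
  set Φ : Set (Site d) := {h | S.isH h ∧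
    ∀ v, w v ≠ zero → ¬ nb ((S.r' : ℤ) + (S.κ : ℤ)) (h - v)} with hΦ
  have hKk' : (S.K S.r' : ℤ) = (S.k' : ℤ) := rfl
  have hKκ : (S.K 0 : ℤ) = (S.κ : ℤ) := rfl
  have hpwL : L.Pairwise (jsep S.K) := by
    rw [hL, List.pairwise_map]
    refine (hfin.toFinset.nodup_toList).imp_of_mem ?_
    intro v v' hv hv' hne
    rw [Finset.mem_toList, Set.Finite.mem_toFinset] at hv hv'
    obtain ⟨i, hi⟩ := hsep v v' hv hv' hne
    refine ⟨i, ?_⟩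
    show (S.r' : ℤ) + (S.r' : ℤ) + (S.K S.r' : ℤ) < |v i - v' i|
    have hN := S.N'cast
    rw [hKk']
    omega
  have hsepL : ∀ j ∈ L, ∀ h ∈ Φ, jsep S.K j ⟨h, 0, S.xb⟩ := by
    intro j hj h hh
    rw [hL, List.mem_map] at hj
    obtain ⟨v, hv, rfl⟩ := hj
    rw [Finset.mem_toList, Set.Finite.mem_toFinset] at hv
    have h2 := hh.2 v hv
    rw [nb] at h2; push_neg at h2
    obtain ⟨i, hi⟩ := h2
    refine ⟨i, ?_⟩
    show (S.r' : ℤ) + ((0:ℕ) : ℤ) + (S.K 0 : ℤ) < |v i - h i|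
    rw [hKκ]
    have h5 : |(h - v) i| = |v i - h i| := by
      show |h i - v i| = _
      rw [abs_sub_comm]
    push_cast
    omega
  have hΦΦ : ∀ h ∈ Φ, ∀ h' ∈ Φ, h ≠ h' →
      jsep S.K (⟨h, 0, S.xb⟩ : Job d A) ⟨h', 0, S.xb⟩ := by
    intro h hh h' hh' hne
    obtain ⟨i, hi⟩ := Function.ne_iff.mp hne
    refine ⟨i, ?_⟩
    show ((0:ℕ):ℤ) + ((0:ℕ):ℤ) + (S.K 0 : ℤ) < |h i - h' i|
    have hdvd : ((S.κ:ℤ) + 2) ∣ (h i - h' i) := dvd_sub (hh.1 i) (hh'.1 i)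
    have hne2 : h i - h' i ≠ 0 := sub_ne_zero.mpr hi
    have hle : (S.κ:ℤ) + 2 ≤ |h i - h' i| :=
      Int.le_of_dvd (abs_pos.mpr hne2) ((dvd_abs _ _).mpr hdvd)
    rw [hKκ]
    push_cast
    omega
  obtain ⟨xw, hxwX, hctrl, hfield⟩ := fipPlant S.hK L
    (by
      intro j hj
      rw [hL, List.mem_map] at hj
      obtain ⟨v, -, rfl⟩ := hj
      exact P.gadX (w v))
    hpwL Φ S.xb S.hxb hsepL hΦΦ
  refine ⟨xw, hxwX, ?_, ?_⟩
  · intro v hv u hu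
    refine hctrl ⟨v, S.r', P.gad (w v)⟩ ?_ u hu
    rw [hL, List.mem_map]
    exact ⟨v, Finset.mem_toList.mpr (hfin.mem_toFinset.mpr hv), rfl⟩
  · intro h h1 h2
    have := hfield h ⟨h1, h2⟩
    rw [this, S.hxb0]

variable (xw : Config d A)

/-- At most one particle within reach. -/
lemma atmost_one
    (hR : (S.N' : ℤ) ≤ (R₁ : ℤ))
    (hsep : ∀ v v' : Site d, w v ≠ zero → w v' ≠ zero → v ≠ v' →
      ∃ i, (R₁ : ℤ) < |v i - v' i|)
    {t v v' : Site d} (hv : w v ≠ zero) (hv' : w v' ≠ zero)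
    (h1 : nb ((S.r' : ℤ) + (S.κ : ℤ) + (S.r : ℤ)) (t - v))
    (h2 : nb ((S.r' : ℤ) + (S.κ : ℤ) + (S.r : ℤ)) (t - v')) : v = v' := by
  by_contra hne
  obtain ⟨i, hi⟩ := hsep v v' hv hv' hne
  have h3 : (v - v') i = (t - v') i - (t - v) i := by
    simp only [Pi.sub_apply]; ring
  have h4 : |(v - v') i| ≤ |(t - v') i| + |(t - v) i| := by
    rw [h3]; exact abs_sub _ _
  have h5 := h1 i
  have h6 := h2 i
  have h7 : |(v - v') i| = |v i - v' i| := rfl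
  have hN := S.N'cast
  omega

/-- No occurrence far from all particles. -/
lemma far_kill
    (hR : (S.N' : ℤ) ≤ (R₁ : ℤ))
    (hfield : ∀ h : Site d, S.isH h →
      (∀ v, w v ≠ zero → ¬ nb ((S.r' : ℤ) + (S.κ : ℤ)) (h - v)) → xw h = S.bb)
    (hsep : ∀ v v' : Site d, w v ≠ zero → w v' ≠ zero → v ≠ v' →
      ∃ i, (R₁ : ℤ) < |v i - v' i|)
    {t : Site d}
    (htfar : ∀ v, w v ≠ zero → ¬ nb (S.r' : ℤ) (t - v)) : ¬ P.occ xw t := by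
  have hrge := S.rge
  by_cases hnear : ∃ v, w v ≠ zero ∧ nb ((S.r':ℤ) + (S.κ:ℤ) + (S.r:ℤ)) (t - v)
  · obtain ⟨v₀, hv₀, hnb₀⟩ := hnear
    have hfar₀ := htfar v₀ hv₀
    rw [nb] at hfar₀; push_neg at hfar₀
    obtain ⟨i₀, hi₀⟩ := hfar₀
    refine P.not_occ xw t (fun i => 0 ≤ (t - v₀) i) ?_
    intro g hdvd hbnd hpol
    refine hfield (t + g) (fun i => hdvd i) ?_
    intro v hv
    by_cases hvv : v = v₀
    · subst hvv
      intro hcon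
      have h1 := hcon i₀
      have h2 := hpol i₀
      have h3 := (hbnd i₀).1
      have h4 := (hbnd i₀).2
      have h5 : (t + g - v) i₀ = (t - v) i₀ + g i₀ := by
        simp only [Pi.add_apply, Pi.sub_apply]; ring
      rw [h5] at h1
      rcases le_or_gt 0 ((t - v) i₀) with hsgn | hsgn
      · rw [abs_of_nonneg hsgn] at hi₀
        rw [if_pos hsgn] at h2
        rw [abs_of_pos (by omega)] at h1
        omega
      · rw [abs_of_neg hsgn] at hi₀
        rw [if_neg (not_le.mpr hsgn)] at h2
        rw [abs_of_neg (by omega)] at h1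
        omega
    · have hvfar : ¬ nb ((S.r':ℤ) + (S.κ:ℤ) + (S.r:ℤ)) (t - v) := by
        intro hcon
        exact hvv (atmost_one w R₁ hR hsep hv hv₀ hcon hnb₀)
      rw [nb] at hvfar; push_neg at hvfar
      obtain ⟨i, hi⟩ := hvfar
      intro hcon
      have h1 := hcon i
      have h2 := abs_lower ((t - v) i) (g i)
      have h3 := (hbnd i).2
      have h5 : (t + g - v) i = (t - v) i + g i := by
        simp only [Pi.add_apply, Pi.sub_apply]; ring
      rw [h5] at h1
      omega
  · push_neg at hnear
    refine P.not_occ xw t (fun _ => True) ?_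
    intro g hdvd hbnd hpol
    refine hfield (t + g) (fun i => hdvd i) ?_
    intro v hv
    have hvfar := hnear v hv
    rw [nb] at hvfar; push_neg at hvfar
    obtain ⟨i, hi⟩ := hvfar
    intro hcon
    have h1 := hcon i
    have h2 := abs_lower ((t - v) i) (g i)
    have h3 := (hbnd i).2
    have h5 : (t + g - v) i = (t - v) i + g i := by
      simp only [Pi.add_apply, Pi.sub_apply]; ring
    rw [h5] at h1
    omega

/-- No occurrence in the boundary annulus of a gadget. -/
lemma inward_kill
    (hctrl : ∀ v, w v ≠ zero → ∀ u, nb (S.r' : ℤ) u →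
      xw (v + u) = P.gad (w v) u)
    {t v : Site d} (hv : w v ≠ zero)
    (hfar : ¬ nb ((S.r' : ℤ) - (S.r : ℤ)) (t - v))
    (hnear : nb (S.r' : ℤ) (t - v)) : ¬ P.occ xw t := by
  have hrge := S.rge
  have hr' := S.r'cast
  have hg' := S.g'cast
  have hL := S.Lcast
  have hp1 := S.p1cast
  have hg := S.gcast
  rw [nb] at hfar; push_neg at hfar
  obtain ⟨i₀, hi₀⟩ := hfar
  -- transfer to the configuration relative to the gadget center
  have htr : P.occ xw t ↔ P.occ (fun q => xw (v + q)) (t - v) := by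
    unfold Pts.occ
    constructor
    · intro hocc u hu
      show xw (v + (t - v + u)) = P.pinf u
      have h1 : v + (t - v + u) = t + u := by abel
      rw [h1]
      exact hocc u hu
    · intro hocc u hu
      have h1 : v + (t - v + u) = t + u := by abel
      rw [← h1]
      exact hocc u hu
  rw [htr]
  refine P.not_occ _ (t - v) (fun i => (t - v) i ≤ (S.r' : ℤ) - (S.r : ℤ)) ?_
  intro g hdvd hbnd hpol
  -- coordinatewise bound : |(t - v + g) i| ≤ r'
  have hcoord : ∀ i, |(t - v + g) i| ≤ (S.r' : ℤ) := by
    intro i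
    have h1 := hnear i
    have h2 := (hbnd i).1
    have h3 := (hbnd i).2
    have h4 := hpol i
    have h5 : (t - v + g) i = (t - v) i + g i := rfl
    rw [h5, abs_le]
    rw [abs_le] at h1
    by_cases h6 : (t - v) i ≤ (S.r' : ℤ) - (S.r : ℤ)
    · rw [if_pos h6] at h4
      rw [abs_le] at h3
      constructor <;> omega
    · rw [if_neg h6] at h4
      rw [abs_le] at h3
      constructor <;> omega
  -- lower bound at coordinate i₀
  have hlow : (S.r' : ℤ) - 2 * (S.r : ℤ) + 1 ≤ |(t - v + g) i₀| := by
    have h2 := (hbnd i₀).1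
    have h3 := (hbnd i₀).2
    have h4 := hpol i₀
    have h1 := hnear i₀
    rw [abs_le] at h1 h3
    have h5 : (t - v + g) i₀ = (t - v) i₀ + g i₀ := rfl
    rw [h5]
    rcases abs_cases ((t - v) i₀) with h8 | h8
    · -- (t-v) i₀ nonnegative, so it is > r' - r and g is negative
      have h6 : ¬ ((t - v) i₀ ≤ (S.r' : ℤ) - (S.r : ℤ)) := by omega
      rw [if_neg h6] at h4
      rw [abs_of_pos (by omega)]
      omega
    · -- (t-v) i₀ negative, so it is < -(r' - r) and g is positive
      have h6 : (t - v) i₀ ≤ (S.r' : ℤ) - (S.r : ℤ) := by omega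
      rw [if_pos h6] at h4
      rw [abs_of_neg (by omega)]
      omega
  -- conclude via the internal field of the gadget
  have harg : xw (v + (t - v + g)) = P.gad (w v) (t - v + g) :=
    hctrl v hv _ (fun i => hcoord i)
  show xw (v + (t - v + g)) = S.bb
  rw [harg]
  have hin1 : ¬ nb ((S.κ:ℤ) + (S.r:ℤ)) (t - v + g) := by
    intro hcon
    have := hcon i₀
    omega
  have hin2 : ¬ nb ((S.κ:ℤ) + (S.r:ℤ)) (t - v + g - S.ρ) := by
    intro hcon
    have h1 := hcon i₀
    have h2 : |(t - v + g) i₀| - |S.ρ i₀| ≤ |(t - v + g - S.ρ) i₀| := by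
      have h3 : (t - v + g - S.ρ) i₀ = (t - v + g) i₀ + (-(S.ρ i₀)) := by
        simp only [Pi.sub_apply, Pi.add_apply]; ring
      rw [h3]
      have := abs_lower ((t - v + g) i₀) (-(S.ρ i₀))
      rw [abs_neg] at this
      exact this
    have h4 := S.nb_rho i₀
    omega
  cases hs : w v with
  | zero => exact absurd hs hv
  | plus =>
      show P.xp (t - v + g) = S.bb
      exact P.hxpf _ (fun i => hdvd i) hin1
  | minus =>
      show P.xm (t - v + g) = S.bb
      exact P.hxmf _ (fun i => hdvd i) hin1 hin2

/-- Transfer of occurrences between `xw` and a gadget. -/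
lemma occ_transfer
    (hctrl : ∀ v, w v ≠ zero → ∀ u, nb (S.r' : ℤ) u →
      xw (v + u) = P.gad (w v) u)
    {v : Site d} (hv : w v ≠ zero) {e : Site d}
    (he : nb ((S.r' : ℤ) - (S.r : ℤ)) e) :
    P.occ xw (v + e) ↔ P.G (w v) e := by
  have hrge := S.rge
  have h1 : ∀ u : Site d, nb (S.r : ℤ) u → nb (S.r' : ℤ) (e + u) := by
    intro u hu i
    have h2 := he i
    have h3 := hu i
    have h4 : (e + u) i = e i + u i := rfl
    rw [h4]
    have := abs_add_le (e i) (u i)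
    omega
  unfold Pts.G Pts.occ
  constructor
  · intro hocc u hu
    have h2 : v + e + u = v + (e + u) := by abel
    rw [← hctrl v hv (e + u) (h1 u hu), ← h2]
    exact hocc u hu
  · intro hocc u hu
    have h2 : v + e + u = v + (e + u) := by abel
    rw [h2, hctrl v hv (e + u) (h1 u hu)]
    exact hocc u hu

/-- The global characterization of occurrences in `xw`. -/
lemma occ_char
    (hR : (S.N' : ℤ) ≤ (R₁ : ℤ))
    (hctrl : ∀ v, w v ≠ zero → ∀ u, nb (S.r' : ℤ) u →
      xw (v + u) = P.gad (w v) u)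
    (hfield : ∀ h : Site d, S.isH h →
      (∀ v, w v ≠ zero → ¬ nb ((S.r' : ℤ) + (S.κ : ℤ)) (h - v)) → xw h = S.bb)
    (hsep : ∀ v v' : Site d, w v ≠ zero → w v' ≠ zero → v ≠ v' →
      ∃ i, (R₁ : ℤ) < |v i - v' i|)
    (t : Site d) :
    P.occ xw t ↔ ∃ v, w v ≠ zero ∧ P.G (w v) (t - v) := by
  have hrge := S.rge
  have hr' := S.r'cast
  have hg' := S.g'cast
  have hL := S.Lcast
  have hg := S.gcast
  constructor
  · intro hocc
    by_cases h1 : ∃ v, w v ≠ zero ∧ nb (S.r' : ℤ) (t - v)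
    · obtain ⟨v, hv, hnear⟩ := h1
      by_cases h2 : nb ((S.r' : ℤ) - (S.r : ℤ)) (t - v)
      · refine ⟨v, hv, ?_⟩
        have h3 : v + (t - v) = t := by abel
        rw [← occ_transfer P w xw hctrl hv h2, h3]
        exact hocc
      · exact absurd hocc (inward_kill P w xw hctrl hv h2 hnear)
    · push_neg at h1
      exact absurd hocc (far_kill P w R₁ xw hR hfield hsep h1)
  · rintro ⟨v, hv, hG⟩
    have hb := P.G_bound (w v) hG
    have h2 : nb ((S.r' : ℤ) - (S.r : ℤ)) (t - v) := by
      refine nb_mono ?_ hb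
      omega
    have h3 : v + (t - v) = t := by abel
    rw [← h3]
    exact (occ_transfer P w xw hctrl hv h2).mpr hG

end XW


namespace Pts

open Setup WRSymbol

variable {d : ℕ} {A : Type} {S : Setup d A} (P : Pts S)

/-- The opposite sign. -/
def opp : WRSymbol → WRSymbol
  | plus => minus
  | minus => plus
  | zero => zero

/-- The cluster-detection predicate of the decoder. -/
def Pi' (s : WRSymbol) (x : Config d A) (t : Site d) : Prop :=
  ∀ u, nb (S.Λ : ℤ) u → (P.occ x (t + u) ↔ P.G s u)

/-- The full (safe) detection predicate of the decoder. -/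
def Q (R₁ R₂ : ℕ) (s : WRSymbol) (x : Config d A) (t : Site d) : Prop :=
  P.Pi' s x t ∧
  (∀ t' : Site d, t' ≠ t → nb (R₁ : ℤ) (t' - t) →
    ¬ P.Pi' plus x t' ∧ ¬ P.Pi' minus x t') ∧
  (∀ t' : Site d, nb (R₂ : ℤ) (t' - t) → ¬ P.Pi' (opp s) x t')

/-- The decoder. -/
noncomputable def dec (R₁ R₂ : ℕ) (x : Config d A) : Config d WRSymbol :=
  fun t => if P.Q R₁ R₂ plus x t then plus
    else if P.Q R₁ R₂ minus x t then minus else zero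

lemma dec_plus {R₁ R₂ : ℕ} {x : Config d A} {t : Site d}
    (h : P.dec R₁ R₂ x t = plus) : P.Q R₁ R₂ plus x t := by
  by_contra hc
  unfold dec at h
  rw [if_neg hc] at h
  by_cases h2 : P.Q R₁ R₂ minus x t
  · rw [if_pos h2] at h; exact WRSymbol.noConfusion h
  · rw [if_neg h2] at h; exact WRSymbol.noConfusion h

lemma dec_minus {R₁ R₂ : ℕ} {x : Config d A} {t : Site d}
    (h : P.dec R₁ R₂ x t = minus) : P.Q R₁ R₂ minus x t := by
  by_contra hc
  unfold dec at h
  by_cases h1 : P.Q R₁ R₂ plus x t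
  · rw [if_pos h1] at h; exact WRSymbol.noConfusion h
  · rw [if_neg h1, if_neg hc] at h; exact WRSymbol.noConfusion h

lemma dec_nonzero {R₁ R₂ : ℕ} {x : Config d A} {t : Site d}
    (h : P.dec R₁ R₂ x t ≠ zero) :
    (P.Q R₁ R₂ plus x t ∧ P.dec R₁ R₂ x t = plus) ∨
    (P.Q R₁ R₂ minus x t ∧ P.dec R₁ R₂ x t = minus) := by
  unfold dec at h ⊢
  by_cases h1 : P.Q R₁ R₂ plus x t
  · exact Or.inl ⟨h1, by rw [if_pos h1]⟩
  · by_cases h2 : P.Q R₁ R₂ minus x t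
    · exact Or.inr ⟨h2, by rw [if_neg h1, if_pos h2]⟩
    · exact absurd (by rw [if_neg h1, if_neg h2]) h

/-- The decoder is safe: it always produces a point of the
Widom-Rowlinson SFT. -/
lemma dec_safe (R₁ R₂ : ℕ) (x : Config d A) :
    P.dec R₁ R₂ x ∈ (WR d R₁ R₂).carrier := by
  intro s t
  constructor
  · intro hst hs ht
    by_contra hno
    push_neg at hno
    rcases P.dec_nonzero hs with ⟨hQs, -⟩ | ⟨hQs, -⟩ <;>
      rcases P.dec_nonzero ht with ⟨hQt, -⟩ | ⟨hQt, -⟩ <;>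
      [ exact (hQs.2.1 t (Ne.symm hst) (fun i => by
          have h1 : (t - s) i = t i - s i := rfl
          rw [h1, abs_sub_comm]; exact hno i)).1 hQt.1;
        exact (hQs.2.1 t (Ne.symm hst) (fun i => by
          have h1 : (t - s) i = t i - s i := rfl
          rw [h1, abs_sub_comm]; exact hno i)).2 hQt.1;
        exact (hQs.2.1 t (Ne.symm hst) (fun i => by
          have h1 : (t - s) i = t i - s i := rfl
          rw [h1, abs_sub_comm]; exact hno i)).1 hQt.1;
        exact (hQs.2.1 t (Ne.symm hst) (fun i => by
          have h1 : (t - s) i = t i - s i := rfl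
          rw [h1, abs_sub_comm]; exact hno i)).2 hQt.1 ]
  · intro hs ht
    by_contra hno
    push_neg at hno
    have hQs := P.dec_plus hs
    have hQt := P.dec_minus ht
    refine hQs.2.2 t (fun i => ?_) hQt.1
    have h1 : (t - s) i = t i - s i := rfl
    rw [h1, abs_sub_comm]
    exact hno i

/-- Equivariance of occurrences. -/
lemma occ_shift (u : Site d) (x : Config d A) (q : Site d) :
    P.occ (shift u x) q ↔ P.occ x (q + u) := by
  unfold occ
  constructor
  · intro h e he
    have h1 := h e he
    have h2 : (shift u x) (q + e) = x (q + e + u) := rfl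
    have h3 : q + e + u = q + u + e := by abel
    rw [h2, h3] at h1
    exact h1
  · intro h e he
    have h1 := h e he
    have h2 : (shift u x) (q + e) = x (q + e + u) := rfl
    have h3 : q + e + u = q + u + e := by abel
    rw [h2, h3]
    exact h1

lemma Pi'_shift (s : WRSymbol) (u : Site d) (x : Config d A) (t : Site d) :
    P.Pi' s (shift u x) t ↔ P.Pi' s x (t + u) := by
  unfold Pi'
  constructor
  · intro h e he
    have h1 := h e he
    rw [P.occ_shift u x (t + e)] at h1
    have h3 : t + e + u = t + u + e := by abel
    rw [h3] at h1
    exact h1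
  · intro h e he
    rw [P.occ_shift u x (t + e)]
    have h3 : t + e + u = t + u + e := by abel
    rw [h3]
    exact h e he

lemma Q_shift (R₁ R₂ : ℕ) (s : WRSymbol) (u : Site d) (x : Config d A)
    (t : Site d) :
    P.Q R₁ R₂ s (shift u x) t ↔ P.Q R₁ R₂ s x (t + u) := by
  unfold Q
  constructor
  · rintro ⟨h1, h2, h3⟩
    refine ⟨(P.Pi'_shift s u x t).mp h1, ?_, ?_⟩
    · intro t' hne hnb
      have he : t' - u + u = t' := by abel
      have hne' : t' - u ≠ t := by
        intro hc
        apply hne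
        rw [← he, hc]
      have hnb' : nb (R₁ : ℤ) (t' - u - t) := by
        have : t' - u - t = t' - (t + u) := by abel
        rw [this]
        exact hnb
      have := h2 (t' - u) hne' hnb'
      rw [P.Pi'_shift plus u x (t' - u), P.Pi'_shift minus u x (t' - u), he]
        at this
      exact this
    · intro t' hnb
      have he : t' - u + u = t' := by abel
      have hnb' : nb (R₂ : ℤ) (t' - u - t) := by
        have : t' - u - t = t' - (t + u) := by abel
        rw [this]
        exact hnb
      have := h3 (t' - u) hnb'
      rw [P.Pi'_shift (opp s) u x (t' - u), he] at this
      exact this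
  · rintro ⟨h1, h2, h3⟩
    refine ⟨(P.Pi'_shift s u x t).mpr h1, ?_, ?_⟩
    · intro t' hne hnb
      have hne' : t' + u ≠ t + u := by
        intro hc
        exact hne (by
          have := congrArg (fun q => q - u) hc
          simpa using this)
      have hnb' : nb (R₁ : ℤ) (t' + u - (t + u)) := by
        have : t' + u - (t + u) = t' - t := by abel
        rw [this]
        exact hnb
      have := h2 (t' + u) hne' hnb'
      rw [← P.Pi'_shift plus u x t', ← P.Pi'_shift minus u x t'] at this
      exact this
    · intro t' hnb
      have hnb' : nb (R₂ : ℤ) (t' + u - (t + u)) := by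
        have : t' + u - (t + u) = t' - t := by abel
        rw [this]
        exact hnb
      have := h3 (t' + u) hnb'
      rw [← P.Pi'_shift (opp s) u x t'] at this
      exact this

lemma dec_shift (R₁ R₂ : ℕ) (u : Site d) (x : Config d A) :
    P.dec R₁ R₂ (shift u x) = shift u (P.dec R₁ R₂ x) := by
  funext t
  show P.dec R₁ R₂ (shift u x) t = P.dec R₁ R₂ x (t + u)
  unfold dec
  rw [if_congr (P.Q_shift R₁ R₂ plus u x t) rfl rfl,
    if_congr (P.Q_shift R₁ R₂ minus u x t) rfl rfl]

/-- Locality of the decoder. -/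
lemma occ_congr {x y : Config d A} {t : Site d}
    (h : ∀ q, nb (S.r : ℤ) q → x (t + q) = y (t + q)) :
    P.occ x t ↔ P.occ y t := by
  unfold occ
  constructor
  · intro ho u hu; rw [← h u hu]; exact ho u hu
  · intro ho u hu; rw [h u hu]; exact ho u hu

lemma Pi'_congr (s : WRSymbol) {x y : Config d A} {t : Site d}
    (h : ∀ q, nb ((S.Λ : ℤ) + (S.r : ℤ)) q → x (t + q) = y (t + q)) :
    P.Pi' s x t ↔ P.Pi' s y t := by
  unfold Pi'
  have key : ∀ u, nb (S.Λ : ℤ) u → (P.occ x (t + u) ↔ P.occ y (t + u)) := by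
    intro u hu
    refine P.occ_congr (fun q hq => ?_)
    have h1 : t + u + q = t + (u + q) := by abel
    rw [h1]
    refine h (u + q) (fun i => ?_)
    have h2 := hu i
    have h3 := hq i
    have h4 := abs_add_le (u i) (q i)
    have h5 : (u + q) i = u i + q i := rfl
    rw [h5]
    omega
  constructor
  · intro hp u hu; rw [← key u hu]; exact hp u hu
  · intro hp u hu; rw [key u hu]; exact hp u hu

lemma Q_congr (R₁ R₂ : ℕ) (hR12 : R₁ ≤ R₂) (s : WRSymbol)
    {x y : Config d A} {t : Site d}
    (h : ∀ q, nb ((R₂ : ℤ) + (S.Λ : ℤ) + (S.r : ℤ)) q → x (t + q) = y (t + q)) :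
    P.Q R₁ R₂ s x t ↔ P.Q R₁ R₂ s y t := by
  have key : ∀ s' : WRSymbol, ∀ t' : Site d, nb (R₂ : ℤ) (t' - t) →
      (P.Pi' s' x t' ↔ P.Pi' s' y t') := by
    intro s' t' hnb
    refine P.Pi'_congr s' (fun q hq => ?_)
    have h1 : t' + q = t + (t' - t + q) := by abel
    rw [h1]
    refine h (t' - t + q) (fun i => ?_)
    have h2 := hnb i
    have h3 := hq i
    have h4 := abs_add_le ((t' - t) i) (q i)
    have h5 : (t' - t + q) i = (t' - t) i + q i := rfl
    rw [h5]
    omega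
  have hself : nb (R₂ : ℤ) (t - t) := by
    intro i
    have : (t - t) i = 0 := by simp
    rw [this]
    simp
  unfold Q
  constructor
  · rintro ⟨h1, h2, h3⟩
    refine ⟨(key s t hself).mp h1, ?_, ?_⟩
    · intro t' hne hnb
      have hnb2 : nb (R₂ : ℤ) (t' - t) := nb_mono (by omega) hnb
      have := h2 t' hne hnb
      rw [key plus t' hnb2, key minus t' hnb2] at this
      exact this
    · intro t' hnb
      have := h3 t' hnb
      rw [key (opp s) t' hnb] at this
      exact this
  · rintro ⟨h1, h2, h3⟩
    refine ⟨(key s t hself).mpr h1, ?_, ?_⟩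
    · intro t' hne hnb
      have hnb2 : nb (R₂ : ℤ) (t' - t) := nb_mono (by omega) hnb
      have := h2 t' hne hnb
      rw [← key plus t' hnb2, ← key minus t' hnb2] at this
      exact this
    · intro t' hnb
      have := h3 t' hnb
      rw [← key (opp s) t' hnb] at this
      exact this

lemma dec_local (R₁ R₂ : ℕ) (hR12 : R₁ ≤ R₂) {x y : Config d A} {t : Site d}
    (h : ∀ q, nb ((R₂ : ℤ) + (S.Λ : ℤ) + (S.r : ℤ)) q → x (t + q) = y (t + q)) :
    P.dec R₁ R₂ x t = P.dec R₁ R₂ y t := by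
  unfold dec
  rw [if_congr (P.Q_congr R₁ R₂ hR12 plus h) rfl rfl,
    if_congr (P.Q_congr R₁ R₂ hR12 minus h) rfl rfl]

end Pts


section Decode

open Setup WRSymbol

variable {d : ℕ} {A : Type} [Finite A] {S : Setup d A} (P : Pts S)
variable (w : Config d WRSymbol) (R₁ R₂ : ℕ) (xw : Config d A)

lemma Pi'_char
    (hR : (S.N' : ℤ) ≤ (R₁ : ℤ))
    (hctrl : ∀ v, w v ≠ zero → ∀ u, nb (S.r' : ℤ) u →
      xw (v + u) = P.gad (w v) u)
    (hfield : ∀ h : Site d, S.isH h →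
      (∀ v, w v ≠ zero → ¬ nb ((S.r' : ℤ) + (S.κ : ℤ)) (h - v)) → xw h = S.bb)
    (hsep : ∀ v v' : Site d, w v ≠ zero → w v' ≠ zero → v ≠ v' →
      ∃ i, (R₁ : ℤ) < |v i - v' i|)
    (s : WRSymbol) (hs : s ≠ zero) (t : Site d) :
    P.Pi' s xw t ↔ w t = s := by
  have hrge := S.rge
  have hr' := S.r'cast
  have hg' := S.g'cast
  have hL := S.Lcast
  have hg := S.gcast
  have hp1 := S.p1cast
  have hN := S.N'cast
  have hOC := occ_char P w R₁ xw hR hctrl hfield hsep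
  constructor
  · -- hard direction
    intro hPi
    have hocc : P.occ xw t := by
      have h0 := hPi 0 (nb_zero (by omega))
      have h1 : t + 0 = t := by abel
      rw [h1] at h0
      exact h0.mpr (P.G_zero s)
    obtain ⟨v, hv, hG⟩ := (hOC t).mp hocc
    have hgb := P.G_bound (w v) hG
    -- claim 1 : the cluster of `s` matches the translated cluster of `w v`
    have claim1 : ∀ u, nb (S.Λ : ℤ) u →
        (P.G s u ↔ P.G (w v) ((t - v) + u)) := by
      intro u hu
      have hPiu := hPi u hu
      have hX : P.occ xw (t + u) ↔ P.G (w v) ((t - v) + u) := by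
        constructor
        · intro ho
          obtain ⟨v', hv', hG'⟩ := (hOC (t + u)).mp ho
          have hvv : v' = v := by
            by_contra hne
            obtain ⟨i, hi⟩ := hsep v v' hv hv' (fun hc => hne hc.symm)
            have hb1 := hgb i
            have hb2 := (P.G_bound (w v') hG') i
            have hb3 := hu i
            have he : (v - v') i = ((t + u - v') i) - ((t - v) i) - (u i) := by
              simp only [Pi.sub_apply, Pi.add_apply]; ring
            have h4 : |(v - v') i| ≤ |(t + u - v') i| + |(t - v) i| + |u i| := by
              rw [he]; exact abs3 _ _ _
            have h5 : |(v - v') i| = |v i - v' i| := rfl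
            omega
          subst hvv
          have he : t + u - v' = (t - v') + u := by abel
          rw [he] at hG'
          exact hG'
        · intro hGv
          refine (hOC (t + u)).mpr ⟨v, hv, ?_⟩
          have he : t + u - v = (t - v) + u := by abel
          rw [he]
          exact hGv
      exact Iff.trans hPiu.symm hX
    by_cases hsv : w v = s
    · -- then the translation is trivial
      have hstep : ∀ n : ℕ, P.G s (fun i => (n : ℤ) * (t - v) i) := by
        intro n
        induction n with
        | zero =>
            have he : (fun i => ((0:ℕ) : ℤ) * (t - v) i) = (0 : Site d) := by
              funext i; simp
            rw [he]
            exact P.G_zero s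
        | succ n ih =>
            have hb := P.G_bound s ih
            have hu : nb (S.Λ : ℤ) (fun i => (n : ℤ) * (t - v) i) :=
              nb_mono (by omega) hb
            have h2 := (claim1 _ hu).mp ih
            rw [hsv] at h2
            have he : (t - v) + (fun i => (n : ℤ) * (t - v) i)
                = (fun i => ((n+1 : ℕ) : ℤ) * (t - v) i) := by
              funext i
              show (t - v) i + (n : ℤ) * (t - v) i = _
              push_cast
              ring
            rw [he] at h2
            exact h2
      have hg0 : t - v = 0 := by
        by_contra hne
        obtain ⟨i, hi⟩ := Function.ne_iff.mp hne
        have hi' : (t - v) i ≠ 0 := by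
          intro hc; exact hi (by rw [hc]; rfl)
        have h1 : (1 : ℤ) ≤ |(t - v) i| := Int.one_le_abs hi'
        set n : ℕ := S.γ + S.ρ1 + 1 with hn
        have hb := P.G_bound s (hstep n)
        have h2 : |(n : ℤ) * (t - v) i| ≤ (S.γ : ℤ) + (S.ρ1 : ℤ) := hb i
        have h3 : |(n : ℤ) * (t - v) i| = (n : ℤ) * |(t - v) i| := by
          rw [abs_mul, abs_of_nonneg (by positivity)]
        rw [h3] at h2
        have h4 : ((n : ℕ) : ℤ) = (S.γ : ℤ) + (S.ρ1 : ℤ) + 1 := by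
          rw [hn]; push_cast; ring
        have h5 : (n : ℤ) * 1 ≤ (n : ℤ) * |(t - v) i| :=
          mul_le_mul_of_nonneg_left h1 (by positivity)
        omega
      have ht : t = v := sub_eq_zero.mp hg0
      rw [ht]
      exact hsv
    · -- contradiction : mixed signs are impossible
      exfalso
      cases s with
      | zero => exact hs rfl
      | plus =>
          have hwv : w v = minus := by
            cases hc : w v with
            | zero => exact absurd hc hv
            | plus => exact absurd hc hsv
            | minus => rfl
          have h1 : P.G plus (-(t - v)) := by
            have hu : nb (S.Λ : ℤ) (-(t - v)) := nb_mono (by omega) (nb_neg hgb)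
            have h2 := (claim1 _ hu).mpr (by
              have he : (t - v) + -(t - v) = (0 : Site d) := by abel
              rw [he, hwv]
              exact P.G_zero minus)
            exact h2
          have h2 : P.G plus (S.ρ - (t - v)) := by
            have hρ := S.nb_rho
            have hu : nb (S.Λ : ℤ) (S.ρ - (t - v)) := by
              intro i
              have h3 := (nb_sub hρ hgb) i
              have h4 := hL
              have h5 := hg'
              omega
            have h3 := (claim1 _ hu).mpr (by
              have he : (t - v) + (S.ρ - (t - v)) = S.ρ := by abel
              rw [he, hwv]
              exact P.G_rho)
            exact h3
          have hb1 := P.Gp_bound h1 ⟨0, S.hd⟩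
          have hb2 := P.Gp_bound h2 ⟨0, S.hd⟩
          have he1 : |(-(t - v)) ⟨0, S.hd⟩| = |(t - v) ⟨0, S.hd⟩| := by
            rw [Pi.neg_apply, abs_neg]
          have he2 : (S.ρ - (t - v)) ⟨0, S.hd⟩
              = (S.ρ1 : ℤ) - (t - v) ⟨0, S.hd⟩ := by
            rw [Pi.sub_apply, S.rho_at]
          rw [he2] at hb2
          rw [he1] at hb1
          have h6 := abs_add_le ((S.ρ1 : ℤ) - (t - v) ⟨0, S.hd⟩)
            ((t - v) ⟨0, S.hd⟩)
          have h7 : (S.ρ1 : ℤ) - (t - v) ⟨0, S.hd⟩ + (t - v) ⟨0, S.hd⟩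
              = (S.ρ1 : ℤ) := by ring
          rw [h7] at h6
          have h8 : |(S.ρ1 : ℤ)| = (S.ρ1 : ℤ) := abs_of_nonneg (by positivity)
          omega
      | minus =>
          have hwv : w v = plus := by
            cases hc : w v with
            | zero => exact absurd hc hv
            | minus => exact absurd hc hsv
            | plus => rfl
          have h1 : P.G plus (t - v) := by
            have hu : nb (S.Λ : ℤ) (0 : Site d) := nb_zero (by omega)
            have h2 := (claim1 _ hu).mp (P.G_zero minus)
            rw [hwv] at h2
            have he : (t - v) + (0 : Site d) = t - v := by abel
            rw [he] at h2
            exact h2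
          have h2 : P.G plus ((t - v) + S.ρ) := by
            have hρ := S.nb_rho
            have hu : nb (S.Λ : ℤ) S.ρ := by
              intro i
              have h3 := hρ i
              omega
            have h3 := (claim1 S.ρ hu).mp P.G_rho
            rw [hwv] at h3
            exact h3
          have hb1 := P.Gp_bound h1 ⟨0, S.hd⟩
          have hb2 := P.Gp_bound h2 ⟨0, S.hd⟩
          have he2 : ((t - v) + S.ρ) ⟨0, S.hd⟩
              = (t - v) ⟨0, S.hd⟩ + (S.ρ1 : ℤ) := by
            rw [Pi.add_apply, S.rho_at]
          rw [he2] at hb2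
          have h6 := abs_add_le ((t - v) ⟨0, S.hd⟩ + (S.ρ1 : ℤ))
            (-((t - v) ⟨0, S.hd⟩))
          have h7 : (t - v) ⟨0, S.hd⟩ + (S.ρ1 : ℤ) + -((t - v) ⟨0, S.hd⟩)
              = (S.ρ1 : ℤ) := by ring
          rw [h7, abs_neg] at h6
          have h8 : |(S.ρ1 : ℤ)| = (S.ρ1 : ℤ) := abs_of_nonneg (by positivity)
          omega
  · -- easy direction
    intro hwt u hu
    constructor
    · intro ho
      obtain ⟨v', hv', hG'⟩ := (hOC (t + u)).mp ho
      have hvv : v' = t := by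
        by_contra hne
        have hvt : w t ≠ zero := by rw [hwt]; exact hs
        obtain ⟨i, hi⟩ := hsep t v' hvt hv' (fun hc => hne hc.symm)
        have hb2 := (P.G_bound (w v') hG') i
        have hb3 := hu i
        have he : (t - v') i = ((t + u - v') i) - (u i) := by
          simp only [Pi.sub_apply, Pi.add_apply]; ring
        have h4 : |(t - v') i| ≤ |(t + u - v') i| + |u i| := by
          rw [he]
          exact abs_sub _ _
        have h5 : |(t - v') i| = |t i - v' i| := rfl
        omega
      rw [hvv] at hG'
      have he : t + u - t = u := by abel
      rw [he, hwt] at hG'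
      exact hG'
    · intro hGu
      refine (hOC (t + u)).mpr ⟨t, by rw [hwt]; exact hs, ?_⟩
      have he : t + u - t = u := by abel
      rw [he, hwt]
      exact hGu

/-- The decoder decodes `xw` to exactly `w`. -/
lemma dec_eq
    (hR : (S.N' : ℤ) ≤ (R₁ : ℤ))
    (hctrl : ∀ v, w v ≠ zero → ∀ u, nb (S.r' : ℤ) u →
      xw (v + u) = P.gad (w v) u)
    (hfield : ∀ h : Site d, S.isH h →
      (∀ v, w v ≠ zero → ¬ nb ((S.r' : ℤ) + (S.κ : ℤ)) (h - v)) → xw h = S.bb)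
    (hsep : ∀ v v' : Site d, w v ≠ zero → w v' ≠ zero → v ≠ v' →
      ∃ i, (R₁ : ℤ) < |v i - v' i|)
    (hw2 : ∀ u u' : Site d, w u = plus → w u' = minus →
      ∃ i, (R₂ : ℤ) < |u i - u' i|) :
    P.dec R₁ R₂ xw = w := by
  have hPC := Pi'_char P w R₁ xw hR hctrl hfield hsep
  funext t
  have hQp : ∀ t₀ : Site d, w t₀ = plus → P.Q R₁ R₂ plus xw t₀ := by
    intro t₀ hwt
    refine ⟨(hPC plus (by simp) t₀).mpr hwt, ?_, ?_⟩
    · intro t' hne hnb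
      constructor
      · intro hP
        have hwt' := (hPC plus (by simp) t').mp hP
        obtain ⟨i, hi⟩ := hsep t' t₀ (by rw [hwt']; simp) (by rw [hwt]; simp) hne
        have := hnb i
        have h5 : |(t' - t₀) i| = |t' i - t₀ i| := rfl
        omega
      · intro hP
        have hwt' := (hPC minus (by simp) t').mp hP
        obtain ⟨i, hi⟩ := hsep t' t₀ (by rw [hwt']; simp) (by rw [hwt]; simp) hne
        have := hnb i
        have h5 : |(t' - t₀) i| = |t' i - t₀ i| := rfl
        omega
    · intro t' hnb hP
      have hwt' := (hPC (Pts.opp plus) (by simp [Pts.opp]) t').mp hP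
      have hwt'2 : w t' = minus := hwt'
      obtain ⟨i, hi⟩ := hw2 t₀ t' hwt hwt'2
      have := hnb i
      have h5 : |(t' - t₀) i| = |t₀ i - t' i| := by
        show |t' i - t₀ i| = _
        rw [abs_sub_comm]
      omega
  have hQm : ∀ t₀ : Site d, w t₀ = minus → P.Q R₁ R₂ minus xw t₀ := by
    intro t₀ hwt
    refine ⟨(hPC minus (by simp) t₀).mpr hwt, ?_, ?_⟩
    · intro t' hne hnb
      constructor
      · intro hP
        have hwt' := (hPC plus (by simp) t').mp hP
        obtain ⟨i, hi⟩ := hsep t' t₀ (by rw [hwt']; simp) (by rw [hwt]; simp) hne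
        have := hnb i
        have h5 : |(t' - t₀) i| = |t' i - t₀ i| := rfl
        omega
      · intro hP
        have hwt' := (hPC minus (by simp) t').mp hP
        obtain ⟨i, hi⟩ := hsep t' t₀ (by rw [hwt']; simp) (by rw [hwt]; simp) hne
        have := hnb i
        have h5 : |(t' - t₀) i| = |t' i - t₀ i| := rfl
        omega
    · intro t' hnb hP
      have hwt' := (hPC (Pts.opp minus) (by simp [Pts.opp]) t').mp hP
      have hwt'2 : w t' = plus := hwt'
      obtain ⟨i, hi⟩ := hw2 t' t₀ hwt'2 hwt
      have := hnb i
      have h5 : |(t' - t₀) i| = |t' i - t₀ i| := rfl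
      omega
  cases hwt : w t with
  | zero =>
      unfold Pts.dec
      have h1 : ¬ P.Q R₁ R₂ plus xw t := by
        intro h
        have := (hPC plus (by simp) t).mp h.1
        rw [hwt] at this
        exact WRSymbol.noConfusion this
      have h2 : ¬ P.Q R₁ R₂ minus xw t := by
        intro h
        have := (hPC minus (by simp) t).mp h.1
        rw [hwt] at this
        exact WRSymbol.noConfusion this
      rw [if_neg h1, if_neg h2]
  | plus =>
      unfold Pts.dec
      rw [if_pos (hQp t hwt)]
  | minus =>
      unfold Pts.dec
      have h1 : ¬ P.Q R₁ R₂ plus xw t := by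
        intro h
        have := (hPC plus (by simp) t).mp h.1
        rw [hwt] at this
        exact WRSymbol.noConfusion this
      rw [if_neg h1, if_pos (hQm t hwt)]

end Decode

end Statement5Aux

/-- Theorem 3.3 of the paper. For any `d > 1` and any nontrivial
`ℤ^d` subshift `X` with the D*-condition, there exists `N'` such that for all
`R₂ ≥ R₁ ≥ N'` there is a factor map from `X` onto the Widom–Rowlinson SFT
`W_{R₁,R₂}`. -/
theorem statement5 {d : ℕ} (hd : 1 < d) {A : Type} [Finite A] (X : Subshift d A)
    (hD : DStarCondition X)
    (hnontriv : ∃ x ∈ X.carrier, ∃ y ∈ X.carrier, x ≠ y) :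
    ∃ N' : ℕ, ∀ R₁ R₂ : ℕ, N' ≤ R₁ → R₁ ≤ R₂ →
      ∃ φ : Config d A → Config d WRSymbol, IsFactorMapOn X (WR d R₁ R₂) φ := by
  classical
  obtain ⟨x0, hx0, y0, hy0, hxy⟩ := hnontriv
  have hdiff : ∃ t0 : Site d, x0 t0 ≠ y0 t0 := by
    by_contra hc
    push_neg at hc
    exact hxy (funext hc)
  obtain ⟨t0, ht0⟩ := hdiff
  choose K hK using hD
  set S : Statement5Aux.Setup d A :=
    { hd := by omega
      X := X
      K := K
      hK := hK
      a := x0 t0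
      bb := y0 t0
      hab := ht0
      xa := shift t0 x0
      xb := shift t0 y0
      hxa := X.shift_mem' t0 x0 hx0
      hxb := X.shift_mem' t0 y0 hy0
      hxa0 := by show x0 (0 + t0) = x0 t0; rw [zero_add]
      hxb0 := by show y0 (0 + t0) = y0 t0; rw [zero_add] } with hS
  obtain ⟨P⟩ := Statement5Aux.exists_pts S
  refine ⟨S.N', ?_⟩
  intro R₁ R₂ hR1 hR12
  have hR : ((S.N' : ℕ) : ℤ) ≤ (R₁ : ℤ) := by exact_mod_cast hR1
  letI tA : TopologicalSpace (Config d A) := configTop d A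
  letI tB : TopologicalSpace (Config d WRSymbol) := configTop d WRSymbol
  haveI : CompactSpace (Config d A) := Statement5Aux.config_compactSpace
  haveI : T2Space (Config d WRSymbol) := Statement5Aux.config_t2Space
  have hcont : @Continuous _ _ (configTop d A) (configTop d WRSymbol)
      (P.dec R₁ R₂) :=
    Statement5Aux.continuous_of_local (P.dec R₁ R₂)
      ((R₂ : ℤ) + (S.Λ : ℤ) + (S.r : ℤ))
      (fun x y' t h => P.dec_local R₁ R₂ hR12 h)
  -- the factor map
  refine ⟨P.dec R₁ R₂, ?_, ?_, ?_, ?_⟩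
  · -- continuity
    exact hcont.continuousOn
  · -- maps into the WR SFT
    exact fun x _ => P.dec_safe R₁ R₂ x
  · -- equivariance
    exact fun t x _ => P.dec_shift R₁ R₂ t x
  · -- surjectivity
    intro y hy
    have hy1 : ∀ v v' : Site d, y v ≠ WRSymbol.zero → y v' ≠ WRSymbol.zero →
        v ≠ v' → ∃ i, (R₁ : ℤ) < |v i - v' i| :=
      fun v v' hv hv' hne => (hy v v').1 hne hv hv'
    have hy2 : ∀ u u' : Site d, y u = WRSymbol.plus → y u' = WRSymbol.minus →
        ∃ i, (R₂ : ℤ) < |u i - u' i| :=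
      fun u u' h1 h2 => (hy u u').2 h1 h2
    -- truncations of y
    set wm : ℕ → Config d WRSymbol := fun m t =>
      if (∀ i, |t i| ≤ (m : ℤ)) then y t else WRSymbol.zero with hwm
    have hval : ∀ m t, wm m t ≠ WRSymbol.zero →
        wm m t = y t ∧ y t ≠ WRSymbol.zero := by
      intro m t h
      simp only [hwm] at h ⊢
      by_cases hc : (∀ i, |t i| ≤ (m : ℤ))
      · rw [if_pos hc] at h ⊢
        exact ⟨rfl, h⟩
      · rw [if_neg hc] at h
        exact absurd rfl h
    -- each truncation is in the image of the decoder
    have hmem : ∀ m, ∃ x ∈ X.carrier, P.dec R₁ R₂ x = wm m := by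
      intro m
      have hsep_m : ∀ v v' : Site d, wm m v ≠ WRSymbol.zero →
          wm m v' ≠ WRSymbol.zero → v ≠ v' →
          ∃ i, (R₁ : ℤ) < |v i - v' i| := by
        intro v v' hv hv' hne
        exact hy1 v v' (hval m v hv).2 (hval m v' hv').2 hne
      have hfin : {v | wm m v ≠ WRSymbol.zero}.Finite := by
        refine Set.Finite.subset
          (Fintype.piFinset fun _ : Fin d =>
            Finset.Icc (-(m : ℤ)) (m : ℤ)).finite_toSet ?_
        intro v hv
        simp only [Set.mem_setOf_eq, hwm] at hv
        by_cases hc : (∀ i, |v i| ≤ (m : ℤ))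
        · refine Finset.mem_coe.mpr (Fintype.mem_piFinset.mpr ?_)
          intro i
          rw [Finset.mem_Icc, ← abs_le]
          exact hc i
        · rw [if_neg hc] at hv
          exact absurd rfl hv
      obtain ⟨xw, hxwX, hctrl, hfield⟩ :=
        Statement5Aux.exists_xw P (wm m) R₁ hR hsep_m hfin
      have hw2_m : ∀ u u' : Site d, wm m u = WRSymbol.plus →
          wm m u' = WRSymbol.minus → ∃ i, (R₂ : ℤ) < |u i - u' i| := by
        intro u u' h1 h2
        have hu := hval m u (by rw [h1]; simp)
        have hu' := hval m u' (by rw [h2]; simp)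
        rw [hu.1] at h1
        rw [hu'.1] at h2
        exact hy2 u u' h1 h2
      have hdec := Statement5Aux.dec_eq P (wm m) R₁ R₂ xw hR hctrl hfield
        hsep_m hw2_m
      exact ⟨xw, hxwX, hdec⟩
    refine Statement5Aux.surj_limit X (P.dec R₁ R₂) hcont y wm ?_ hmem
    intro t
    refine ⟨Finset.univ.sup (fun i => (t i).natAbs), ?_⟩
    intro m hm
    simp only [hwm]
    refine if_pos ?_
    intro i
    have h1 : (t i).natAbs ≤ Finset.univ.sup (fun i => (t i).natAbs) :=
      Finset.le_sup (f := fun i => (t i).natAbs) (Finset.mem_univ i)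
    have h2 : |t i| = ((t i).natAbs : ℤ) := Int.abs_eq_natAbs _
    rw [h2]
    exact_mod_cast le_trans h1 hm
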